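/- arXiv:1810.07285 — 5 statements merged into one kernel-verified Lean document; each statement's English description precedes it below -/
import Mathlib

section
/- Let φ: Σ⁺ → S be a semigroup morphism to a finite semigroup S. If there exists a φ-weakly-good automaton with N states, then there exists a φ-good automaton with N+1 states. -/
/-- A (nondeterministic) Büchi/finite-word automaton with ordered states. -/
structure Auto (A : Type) where
  Q : Type
  fin : Fintype Q
  lin : LinearOrder Q
  trans : Q → A → Q → Prop
  init : Q
  final : Set Q
  rep : Set Q

namespace Auto

variable {A : Type} (M : Auto A)

/-- The strict order on states. -/
def slt (p q : M.Q) : Prop := M.lin.lt p q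

/-- `pathIn X p w q`: nonempty word `w` labels a run from `p` to `q`
with all intermediate states in `X`. -/
def pathIn (X : Set M.Q) : M.Q → List A → M.Q → Prop
  | _, [], _ => False
  | p, [a], q => M.trans p a q
  | p, a :: b :: w, q => ∃ r, r ∈ X ∧ M.trans p a r ∧ pathIn X r (b :: w) q

/-- `L_{p,X,q}`. -/
def Lset (X : Set M.Q) (p q : M.Q) : Set (List A) := {w | M.pathIn X p w q}

/-- `↓q`. -/
def below (q : M.Q) : Set M.Q := {p | M.slt p q}

/-- `L_q = L_{q,↓q,q}`. -/
def Lq (q : M.Q) : Set (List A) := M.Lset (M.below q) q q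

/-- Accepting run on a nonempty finite word: `ρ i` is the state after reading `i` letters. -/
def FinAccRun (w : List A) (ρ : Fin (w.length + 1) → M.Q) : Prop :=
  ρ 0 = M.init ∧
  (∀ i : Fin w.length, M.trans (ρ i.castSucc) (w.get i) (ρ i.succ)) ∧
  ρ (Fin.last w.length) ∈ M.final

/-- Accepting (Büchi) run on an infinite word. -/
def InfAccRun (w : ℕ → A) (ρ : ℕ → M.Q) : Prop :=
  ρ 0 = M.init ∧ (∀ i, M.trans (ρ i) (w i) (ρ (i + 1))) ∧
  ∀ n, ∃ m, n ≤ m ∧ ρ m ∈ M.rep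

/-- (G1): every finite or infinite word has exactly one accepting run. -/
def G1 : Prop :=
  (∀ w : List A, w ≠ [] → ∃! ρ : Fin (w.length + 1) → M.Q, M.FinAccRun w ρ) ∧
  (∀ w : ℕ → A, ∃! ρ : ℕ → M.Q, M.InfAccRun w ρ)

/-- (G2): each `L_q` is mapped by `φ` to a single idempotent of `S`. -/
def G2 {S : Type} [Semigroup S] (φ : List A → S) : Prop :=
  ∀ q : M.Q, ∃ e : S, e * e = e ∧ ∀ w ∈ M.Lq q, φ w = e

/-- (G3): the initial state has no incoming transitions and is maximal. -/
def G3 : Prop :=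
  (∀ p a, ¬ M.trans p a M.init) ∧ ∀ q : M.Q, q ≠ M.init → M.slt q M.init

/-- `φ`-weakly-good automaton. -/
def WeaklyGood {S : Type} [Semigroup S] (φ : List A → S) : Prop :=
  M.G1 ∧ M.G2 φ ∧ M.G3

/-- (G4) and `φ`-goodness. -/
def Good {S : Type} [Semigroup S] (φ : List A → S) : Prop :=
  M.WeaklyGood φ ∧
  ∃ f : M.Q, M.final = {f} ∧ (∀ a q, ¬ M.trans f a q) ∧
    M.slt f M.init ∧ ∀ q : M.Q, q ≠ M.init → q ≠ f → M.slt q f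

def Deterministic : Prop := ∀ p a q q', M.trans p a q → M.trans p a q' → q = q'

def Complete : Prop := ∀ p a, ∃ q, M.trans p a q

end Auto

/-!
Add a fresh final state (`none`) without outgoing transitions, entered by every transition that
enters an old final state, and order it just below the initial state. Replacing the last state of
an accepting run by the fresh one is a bijection between accepting runs on finite words, and runs
on infinite words never reach it, so (G1) survives. The fresh state is never an intermediate state
of a path, so its loop language is empty; and since by (G3) the new order agrees with the old one
on old states, the loop languages of old states do not grow, which gives (G2).
-/

theorem ExistsUnique.of_map {α β : Sort*} {p : α → Prop} {q : β → Prop} (f : α → β)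
    (hpq : ∀ a, p a → q (f a)) (hqp : ∀ b, q b → ∃ a, p a ∧ f a = b) (h : ∃! a, p a) :
    ∃! b, q b := by
  obtain ⟨a, ha, huniq⟩ := h
  refine ⟨f a, hpq a ha, fun b hb => ?_⟩
  obtain ⟨a', ha', rfl⟩ := hqp b hb
  rw [huniq a' ha']

namespace Auto

variable {A : Type}

attribute [local instance] Auto.lin

open Classical in
/-- `some M.init` on top, then the new state `none`, then the old states in their old order. -/
noncomputable def sinkKey (M : Auto A) (x : Option M.Q) : Bool ×ₗ Bool ×ₗ M.Q :=
  toLex (decide (x = some M.init), toLex (x.isNone, x.getD M.init))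

lemma sinkKey_injective (M : Auto A) : Function.Injective M.sinkKey := by
  intro x y h
  simp only [sinkKey, toLex_inj, Prod.mk.injEq] at h
  cases x <;> cases y <;> simp_all

noncomputable def addSinkFinal (M : Auto A) : Auto A where
  Q := Option M.Q
  fin := @instFintypeOption _ M.fin
  lin := LinearOrder.lift' M.sinkKey M.sinkKey_injective
  trans
    | none, _, _ => False
    | some p, a, none => ∃ q ∈ M.final, M.trans p a q
    | some p, a, some q => M.trans p a q
  init := some M.init
  final := {none}
  rep := some '' M.rep

variable (M : Auto A)

lemma card_addSinkFinal :
    @Fintype.card _ M.addSinkFinal.fin = @Fintype.card _ M.fin + 1 :=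
  @Fintype.card_option _ M.fin

lemma addSinkFinal_slt_iff (x y : Option M.Q) :
    M.addSinkFinal.slt x y ↔ M.sinkKey x < M.sinkKey y := Iff.rfl

lemma addSinkFinal_slt_init {x : Option M.Q} (hx : x ≠ some M.init) :
    M.addSinkFinal.slt x (some M.init) := by
  simp [addSinkFinal_slt_iff, sinkKey, Prod.Lex.lt_iff, hx]

lemma addSinkFinal_slt_none {q : M.Q} (hq : q ≠ M.init) : M.addSinkFinal.slt (some q) none := by
  simp [addSinkFinal_slt_iff, sinkKey, Prod.Lex.lt_iff, hq]

lemma addSinkFinal_slt_some_iff (hmax : ∀ q, q ≠ M.init → M.slt q M.init) (p q : M.Q) :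
    M.addSinkFinal.slt (some p) (some q) ↔ M.slt p q := by
  rw [addSinkFinal_slt_iff]
  by_cases hp : p = M.init <;> by_cases hq : q = M.init
  · subst hp hq; simp [slt]
  · subst hp
    exact iff_of_false (by simp [sinkKey, Prod.Lex.lt_iff, hq]) (hmax q hq).asymm
  · subst hq; simp [sinkKey, Prod.Lex.lt_iff, hp, hmax p hp]
  · simp [sinkKey, Prod.Lex.lt_iff, hp, hq, slt]

lemma addSinkFinal_not_pathIn_none (X : Set (Option M.Q)) :
    ∀ (w : List A) (y : Option M.Q), ¬ M.addSinkFinal.pathIn X none w y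
  | [], _, h => h
  | [_], _, h => h
  | _ :: _ :: _, _, ⟨_, _, h, _⟩ => h

lemma pathIn_of_addSinkFinal_pathIn {X : Set (Option M.Q)} :
    ∀ {w : List A} {p q : M.Q},
      M.addSinkFinal.pathIn X (some p) w (some q) → M.pathIn (some ⁻¹' X) p w q
  | [], _, _, h => h
  | [_], _, _, h => h
  | _ :: _ :: _, _, _, ⟨none, _, _, h⟩ => absurd h (M.addSinkFinal_not_pathIn_none _ _ _)
  | _ :: _ :: _, _, _, ⟨some r, hr, ht, h⟩ => ⟨r, hr, ht, pathIn_of_addSinkFinal_pathIn h⟩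

lemma addSinkFinal_Lq_some_subset (hmax : ∀ q, q ≠ M.init → M.slt q M.init) (q : M.Q) :
    M.addSinkFinal.Lq (some q) ⊆ M.Lq q := by
  have hbelow : some ⁻¹' M.addSinkFinal.below (some q) = M.below q :=
    Set.ext fun r => M.addSinkFinal_slt_some_iff hmax r q
  intro w hw
  have := M.pathIn_of_addSinkFinal_pathIn hw
  rwa [hbelow] at this

lemma addSinkFinal_G2 {S : Type} [Semigroup S] {φ : List A → S}
    (hmax : ∀ q, q ≠ M.init → M.slt q M.init) (h : M.G2 φ) : M.addSinkFinal.G2 φ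
  | none =>
    let ⟨e, he, _⟩ := h M.init
    ⟨e, he, fun w hw => absurd hw (M.addSinkFinal_not_pathIn_none _ w none)⟩
  | some q =>
    let ⟨e, he, hq⟩ := h q
    ⟨e, he, fun w hw => hq w (M.addSinkFinal_Lq_some_subset hmax q hw)⟩

lemma addSinkFinal_G3 (h : M.G3) : M.addSinkFinal.G3 :=
  ⟨fun | none, _ => id | some p, a => h.1 p a, fun _ hx => M.addSinkFinal_slt_init hx⟩

lemma exists_eq_some_of_addSinkFinal_trans {x y : Option M.Q} {a : A}
    (h : M.addSinkFinal.trans x a y) : ∃ p, x = some p := by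
  cases x with
  | none => exact h.elim
  | some p => exact ⟨p, rfl⟩

variable {M} in
def sinkRun {n : ℕ} (σ : Fin (n + 1) → M.Q) : Fin (n + 1) → Option M.Q :=
  fun i => if i = Fin.last n then none else some (σ i)

lemma finAccRun_addSinkFinal {w : List A} (hw : w ≠ []) {σ : Fin (w.length + 1) → M.Q}
    (h : M.FinAccRun w σ) : M.addSinkFinal.FinAccRun w (sinkRun σ) := by
  obtain ⟨h0, hstep, hfin⟩ := h
  have h0last : (0 : Fin (w.length + 1)) ≠ Fin.last _ := by simpa [Fin.ext_iff, eq_comm] using hw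
  refine ⟨by simp [sinkRun, h0last, h0, addSinkFinal], fun i => ?_, if_pos rfl⟩
  by_cases hi : i.succ = Fin.last _
  · simp only [sinkRun, hi, Fin.castSucc_ne_last, if_true, if_false]
    exact ⟨_, hi ▸ hfin, hi ▸ hstep i⟩
  · simp only [sinkRun, hi, Fin.castSucc_ne_last, if_false]
    exact hstep i

lemma exists_finAccRun_of_addSinkFinal {w : List A} {ρ : Fin (w.length + 1) → Option M.Q}
    (h : M.addSinkFinal.FinAccRun w ρ) : ∃ σ, M.FinAccRun w σ ∧ sinkRun σ = ρ := by
  obtain ⟨h0, hstep, hlast⟩ := h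
  replace hlast : ρ (Fin.last _) = none := hlast
  have hsome (j : Fin w.length) : ∃ p, ρ j.castSucc = some p :=
    M.exists_eq_some_of_addSinkFinal_trans (hstep j)
  have hne : w.length ≠ 0 := fun hn => by
    rw [show (0 : Fin (w.length + 1)) = Fin.last _ from Fin.ext hn.symm, hlast] at h0
    cases h0
  set k : Fin w.length := ⟨w.length - 1, by omega⟩
  have hk : k.succ = Fin.last _ := Fin.ext (Nat.sub_add_cancel (Nat.one_le_iff_ne_zero.mpr hne))
  obtain ⟨pk, hpk⟩ := hsome k
  have hkstep := hstep k
  rw [hpk, hk, hlast] at hkstep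
  obtain ⟨qf, hqf, hpkqf⟩ := hkstep
  have hρ : sinkRun (fun i => (ρ i).getD qf) = ρ := by
    funext i
    by_cases hi : i = Fin.last _
    · simp [sinkRun, hi, hlast]
    · obtain ⟨j, rfl⟩ := Fin.exists_castSucc_eq.mpr hi
      obtain ⟨p, hp⟩ := hsome j
      simp [sinkRun, hi, hp]
  refine ⟨_, ⟨by simp [h0, addSinkFinal], fun i => ?_, by simpa [hlast] using hqf⟩, hρ⟩
  by_cases hi : i.succ = Fin.last _
  · obtain rfl : i = k := Fin.succ_injective _ (hi.trans hk.symm)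
    simpa [hpk, hk, hlast] using hpkqf
  · obtain ⟨j, hj⟩ := Fin.exists_castSucc_eq.mpr hi
    obtain ⟨p, hp⟩ := hsome i
    obtain ⟨q, hq⟩ := hsome j
    have := hstep i
    rw [hp, ← hj, hq] at this ⊢
    exact this

lemma infAccRun_addSinkFinal {w : ℕ → A} {σ : ℕ → M.Q} (h : M.InfAccRun w σ) :
    M.addSinkFinal.InfAccRun w (some ∘ σ) :=
  ⟨congrArg some h.1, h.2.1, fun n => let ⟨m, hm, hr⟩ := h.2.2 n; ⟨m, hm, σ m, hr, rfl⟩⟩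

lemma exists_infAccRun_of_addSinkFinal {w : ℕ → A} {ρ : ℕ → Option M.Q}
    (h : M.addSinkFinal.InfAccRun w ρ) : ∃ σ, M.InfAccRun w σ ∧ some ∘ σ = ρ := by
  obtain ⟨h0, hstep, hrep⟩ := h
  choose σ hσ using fun i => M.exists_eq_some_of_addSinkFinal_trans (hstep i)
  obtain rfl : some ∘ σ = ρ := funext fun i => (hσ i).symm
  refine ⟨σ, ⟨Option.some_injective _ h0, hstep, fun n => ?_⟩, rfl⟩
  obtain ⟨m, hm, p, hp, hpσ⟩ := hrep n
  exact ⟨m, hm, Option.some_injective _ hpσ ▸ hp⟩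

lemma addSinkFinal_G1 (h : M.G1) : M.addSinkFinal.G1 :=
  ⟨fun w hw => (h.1 w hw).of_map sinkRun (fun _ => M.finAccRun_addSinkFinal hw)
      fun _ => M.exists_finAccRun_of_addSinkFinal,
    fun w => (h.2 w).of_map (some ∘ ·) (fun _ => M.infAccRun_addSinkFinal)
      fun _ => M.exists_infAccRun_of_addSinkFinal⟩

theorem addSinkFinal_good {S : Type} [Semigroup S] {φ : List A → S} (h : M.WeaklyGood φ) :
    M.addSinkFinal.Good φ := by
  obtain ⟨h1, h2, h3⟩ := h
  refine ⟨⟨M.addSinkFinal_G1 h1, M.addSinkFinal_G2 h3.2 h2, M.addSinkFinal_G3 h3⟩,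
    none, rfl, fun _ _ => id, M.addSinkFinal_slt_init (by simp), ?_⟩
  rintro (_ | q) hq hnone
  · exact absurd rfl hnone
  · exact M.addSinkFinal_slt_none fun h => hq (congrArg some h)

end Auto

theorem good_of_weaklyGood_general {A S : Type} [Semigroup S]
    (φ : List A → S)
    (N : ℕ) (M : Auto A) (hM : M.WeaklyGood φ)
    (hN : @Fintype.card M.Q M.fin = N) :
    ∃ M' : Auto A, M'.Good φ ∧ @Fintype.card M'.Q M'.fin = N + 1 :=
  ⟨M.addSinkFinal, M.addSinkFinal_good hM, hN ▸ M.card_addSinkFinal⟩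

/-- From a `φ`-weakly-good automaton with `N` states one can construct a
`φ`-good automaton (with `N + 1` states). -/
theorem good_of_weaklyGood {A S : Type} [Fintype A] [Semigroup S] [Fintype S]
    (φ : List A → S)
    (hφ : ∀ u v : List A, u ≠ [] → v ≠ [] → φ (u ++ v) = φ u * φ v)
    (N : ℕ) (M : Auto A) (hM : M.WeaklyGood φ)
    (hN : @Fintype.card M.Q M.fin = N) :
    ∃ M' : Auto A, M'.Good φ ∧ @Fintype.card M'.Q M'.fin = N + 1 :=
  good_of_weaklyGood_general φ N M hM hN
end

section
/- Let φ: Σ⁺ → S be a semigroup morphism from the nonempty words over a finite alphabet Σ to a finite semigroup S such that φ(Σ) = {s} is a singleton. Let (k,ℓ) be the lexicographically least pair of positive integers with s^k = s^{k+ℓ}, and let n be the least positive integer such that s^n is idempotent. Then there exists a φ-weakly-good automaton with k+n states whose transition relation is deterministic and complete (for every state q and letter a there is exactly one q' with (q,a,q') ∈ Δ). -/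
/-- `spow s n = s^(n+1)`: powers in a semigroup (`spow s 0 = s`). -/
def spow {S : Type} [Semigroup S] (s : S) : ℕ → S
  | 0 => s
  | n + 1 => spow s n * s

/-!
The automaton ignores letters and accepts every run: its transition map is a lasso, leading from
the initial state through `k - 1` tail states into a cycle of `n` states. Being deterministic and
complete, it has exactly one run on each word, and that run is accepting. A word of `L_q` labels
a loop at `q` that avoids `q` in between, so its length is the minimal period of `q` under the
transition map, which is `n`; hence every such word is mapped to the idempotent `s^n`.
-/

open Function

section Spow

variable {A S : Type} [Semigroup S] (φ : List A → S) (s : S)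

theorem map_eq_spow_length_sub_one
    (hφ : ∀ u v : List A, u ≠ [] → v ≠ [] → φ (u ++ v) = φ u * φ v)
    (hs : ∀ a : A, φ [a] = s) {w : List A} (hw : w ≠ []) :
    φ w = spow s (w.length - 1) := by
  induction w using List.reverseRecOn with
  | nil => exact absurd rfl hw
  | append_singleton u a ih =>
    rcases eq_or_ne u [] with rfl | hu
    · exact hs a
    · obtain ⟨m, hm⟩ : ∃ m, u.length = m + 1 := Nat.exists_eq_succ_of_ne_zero (by simpa using hu)
      rw [hφ u [a] hu (List.cons_ne_nil a []), ih hu, hs, List.length_append, hm]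
      rfl

end Spow

namespace Auto

theorem ne_nil_of_pathIn {A : Type} {M : Auto A} {X : Set M.Q} {p q : M.Q} {w : List A}
    (h : M.pathIn X p w q) : w ≠ [] := by
  rintro rfl
  exact h

def unary (A : Type) {Q : Type} [Fintype Q] [LinearOrder Q] (δ : Q → Q) (q₀ : Q) : Auto A where
  Q := Q
  fin := inferInstance
  lin := inferInstance
  trans p _ q := q = δ p
  init := q₀
  final := Set.univ
  rep := Set.univ

variable (A : Type) {Q : Type} [Fintype Q] [LinearOrder Q] (δ : Q → Q) (q₀ : Q)

theorem unary_deterministic : (unary A δ q₀).Deterministic :=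
  fun _ _ _ _ hq hq' => hq.trans hq'.symm

theorem unary_complete : (unary A δ q₀).Complete :=
  fun p _ => ⟨δ p, rfl⟩

theorem unary_finAccRun_iff (w : List A) (ρ : Fin (w.length + 1) → Q) :
    (unary A δ q₀).FinAccRun w ρ ↔ ρ = fun i : Fin (w.length + 1) => δ^[(i : ℕ)] q₀ := by
  constructor
  · rintro ⟨h0, hstep, -⟩
    funext i
    induction i using Fin.induction with
    | zero => exact h0
    | succ i ih =>
      rw [hstep i, ih, Fin.val_succ, Fin.val_castSucc, iterate_succ_apply']
  · rintro rfl
    refine ⟨rfl, fun i => ?_, Set.mem_univ _⟩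
    exact iterate_succ_apply' δ i q₀

theorem unary_infAccRun_iff (w : ℕ → A) (ρ : ℕ → Q) :
    (unary A δ q₀).InfAccRun w ρ ↔ ρ = fun i => δ^[i] q₀ := by
  constructor
  · rintro ⟨h0, hstep, -⟩
    funext i
    induction i with
    | zero => exact h0
    | succ i ih => rw [hstep i, ih, iterate_succ_apply']
  · rintro rfl
    exact ⟨rfl, fun i => iterate_succ_apply' δ i q₀, fun m => ⟨m, le_rfl, Set.mem_univ _⟩⟩

theorem unary_G1 : (unary A δ q₀).G1 :=
  ⟨fun w _ => ⟨_, (unary_finAccRun_iff A δ q₀ w _).2 rfl,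
      fun _ hρ => (unary_finAccRun_iff A δ q₀ w _).1 hρ⟩,
    fun w => ⟨_, (unary_infAccRun_iff A δ q₀ w _).2 rfl,
      fun _ hρ => (unary_infAccRun_iff A δ q₀ w _).1 hρ⟩⟩

theorem unary_G3 (hδ : ∀ p, δ p ≠ q₀) (hmax : ∀ q, q ≠ q₀ → q < q₀) : (unary A δ q₀).G3 :=
  ⟨fun p _ h => hδ p h.symm, hmax⟩

variable {A δ q₀}

theorem unary_pathIn {X : Set Q} {w : List A} {p q : Q} (h : (unary A δ q₀).pathIn X p w q) :
    q = δ^[w.length] p ∧ ∀ i, 0 < i → i < w.length → δ^[i] p ∈ X := by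
  induction w generalizing p with
  | nil => exact h.elim
  | cons a w ih =>
    cases w with
    | nil => exact ⟨h, fun i hi hi' => absurd hi' (Nat.not_lt.2 hi)⟩
    | cons b w =>
      obtain ⟨r, hrX, rfl, hr⟩ := h
      obtain ⟨hq, hX⟩ := ih hr
      refine ⟨hq, fun i hi hi' => ?_⟩
      obtain ⟨j, rfl⟩ : ∃ j, i = j + 1 := Nat.exists_eq_succ_of_ne_zero hi.ne'
      rcases Nat.eq_zero_or_pos j with rfl | hj
      · exact hrX
      · exact hX j hj (by simpa using hi')

theorem unary_length_eq_minimalPeriod_of_mem_Lq {q : Q} {w : List A}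
    (hw : w ∈ (unary A δ q₀).Lq q) : w.length = minimalPeriod δ q := by
  obtain ⟨hloop, hbelow⟩ := unary_pathIn hw
  have hpos : 0 < w.length := List.length_pos_iff.2 (ne_nil_of_pathIn hw)
  have hper : IsPeriodicPt δ w.length q := hloop.symm
  refine le_antisymm ?_ (hper.minimalPeriod_le hpos)
  by_contra! hlt
  have hlt' : δ^[minimalPeriod δ q] q < q := hbelow _ (hper.minimalPeriod_pos hpos) hlt
  exact hlt'.ne iterate_minimalPeriod

end Auto

section Lasso

/-- The position after `x` steps along a lasso with tail `0, …, t - 1` and cycle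
`t, …, t + n - 1`. -/
def lassoPos (t n x : ℕ) : ℕ := if x < t then x else t + (x - t) % n

theorem lassoPos_lt (t : ℕ) {n : ℕ} (hn : 0 < n) (x : ℕ) : lassoPos t n x < t + n := by
  unfold lassoPos
  split_ifs
  · omega
  · have := Nat.mod_lt (x - t) hn
    omega

theorem lassoPos_of_lt {t n x : ℕ} (hx : x < t + n) : lassoPos t n x = x := by
  unfold lassoPos
  split_ifs
  · rfl
  · rw [Nat.mod_eq_of_lt (by omega)]
    omega

theorem lassoPos_lassoPos_add (t n x i : ℕ) :
    lassoPos t n (lassoPos t n x + i) = lassoPos t n (x + i) := by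
  unfold lassoPos
  by_cases hx : x < t
  · simp only [hx, if_true]
  · rw [if_neg hx, if_neg (by omega), if_neg (by omega),
      show t + (x - t) % n + i - t = (x - t) % n + i by omega,
      show x + i - t = x - t + i by omega, Nat.mod_add_mod]

theorem lassoPos_add_eq_self_iff {t n q : ℕ} (i : ℕ) (htq : t ≤ q) (hqn : q < t + n) :
    lassoPos t n (q + i) = q ↔ n ∣ i := by
  rw [lassoPos, if_neg (by omega), show q + i - t = q - t + i by omega, ← Nat.add_modEq_left_iff,
    Nat.ModEq, Nat.mod_eq_of_lt (show q - t < n by omega)]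
  omega

def lasso (t : ℕ) {n : ℕ} (hn : 0 < n) (p : Fin (t + n + 1)) : Fin (t + n + 1) :=
  if p = Fin.last _ then 0 else Fin.castSucc ⟨lassoPos t n (p + 1), lassoPos_lt t hn _⟩

variable {t n : ℕ} (hn : 0 < n)

theorem lasso_ne_last (p : Fin (t + n + 1)) : lasso t hn p ≠ Fin.last _ := by
  unfold lasso
  split_ifs
  · rw [Ne, Fin.ext_iff, Fin.val_zero, Fin.val_last]
    omega
  · exact Fin.castSucc_ne_last _

theorem lasso_iterate_val {p : Fin (t + n + 1)} (hp : p ≠ Fin.last _) (i : ℕ) :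
    ((lasso t hn)^[i] p : ℕ) = lassoPos t n (p + i) := by
  induction i with
  | zero => exact (lassoPos_of_lt (Fin.val_lt_last hp)).symm
  | succ i ih =>
    have hne : (lasso t hn)^[i] p ≠ Fin.last _ := fun h => by
      have := lassoPos_lt t hn (p + i)
      rw [← ih, h, Fin.val_last] at this
      omega
    rw [iterate_succ_apply', lasso, if_neg hne, Fin.val_castSucc, Fin.val_mk, ih,
      lassoPos_lassoPos_add, add_assoc]

theorem lasso_minimalPeriod {q : Fin (t + n + 1)} (hq : q ∈ periodicPts (lasso t hn)) :
    minimalPeriod (lasso t hn) q = n := by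
  obtain ⟨m, hm, hper⟩ := hq
  have hq_ne : q ≠ Fin.last _ := by
    obtain ⟨j, rfl⟩ := Nat.exists_eq_succ_of_ne_zero hm.ne'
    intro h
    have hloop : (lasso t hn)^[j + 1] q = q := hper
    rw [iterate_succ_apply'] at hloop
    exact lasso_ne_last hn _ (hloop.trans h)
  have hper_iff (i : ℕ) : IsPeriodicPt (lasso t hn) i q ↔ lassoPos t n (q + i) = q := by
    rw [IsPeriodicPt, IsFixedPt, Fin.ext_iff, lasso_iterate_val hn hq_ne]
  have htq : t ≤ q := by
    by_contra h
    have := (hper_iff m).1 hper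
    unfold lassoPos at this
    split_ifs at this <;> omega
  have hdvd (i : ℕ) : IsPeriodicPt (lasso t hn) i q ↔ n ∣ i :=
    (hper_iff i).trans (lassoPos_add_eq_self_iff i htq (Fin.val_lt_last hq_ne))
  exact Nat.dvd_antisymm ((hdvd n).2 dvd_rfl).minimalPeriod_dvd
    ((hdvd _).1 (isPeriodicPt_minimalPeriod _ _))

end Lasso

theorem one_generator_weaklyGood_general {A S : Type}
    [Semigroup S]
    (φ : List A → S)
    (hφ : ∀ u v : List A, u ≠ [] → v ≠ [] → φ (u ++ v) = φ u * φ v)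
    (s : S) (hs : ∀ a : A, φ [a] = s)
    (k : ℕ) (hk : 0 < k)
    (n : ℕ) (hn : 0 < n)
    (hidem : spow s (n - 1) * spow s (n - 1) = spow s (n - 1)) :
    ∃ M : Auto A, M.WeaklyGood φ ∧ M.Deterministic ∧ M.Complete ∧
      @Fintype.card M.Q M.fin = k + n := by
  refine ⟨Auto.unary A (lasso (k - 1) hn) (Fin.last _),
    ⟨Auto.unary_G1 _ _ _, fun q => ?_,
      Auto.unary_G3 _ _ _ (lasso_ne_last hn) fun _ hq => Fin.lt_last_iff_ne_last.2 hq⟩,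
    Auto.unary_deterministic _ _ _, Auto.unary_complete _ _ _, ?_⟩
  · refine ⟨spow s (n - 1), hidem, fun w hw => ?_⟩
    have hne := Auto.ne_nil_of_pathIn hw
    have hlen := Auto.unary_length_eq_minimalPeriod_of_mem_Lq hw
    have hq : q ∈ periodicPts (lasso (k - 1) hn) :=
      minimalPeriod_pos_iff_mem_periodicPts.1 (hlen ▸ List.length_pos_iff.2 hne)
    rw [map_eq_spow_length_sub_one φ s hφ hs hne, hlen, lasso_minimalPeriod hn hq]
  · change Fintype.card (Fin _) = _
    rw [Fintype.card_fin]
    omega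

/-- **One-generator base case.** If all letters are mapped to the same element
`s`, with `(k, ℓ)` the lexicographically least pair of positive integers such
that `s^k = s^{k+ℓ}` and `n` the least positive integer with `s^n` idempotent,
then there is a deterministic and complete `φ`-weakly-good automaton with
`k + n` states. -/
theorem one_generator_weaklyGood {A S : Type} [Fintype A] [Nonempty A]
    [Semigroup S] [Fintype S]
    (φ : List A → S)
    (hφ : ∀ u v : List A, u ≠ [] → v ≠ [] → φ (u ++ v) = φ u * φ v)
    (s : S) (hs : ∀ a : A, φ [a] = s)
    (k ℓ : ℕ) (hk : 0 < k) (hℓ : 0 < ℓ)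
    (hkl : spow s (k - 1) = spow s (k + ℓ - 1))
    (hklmin : ∀ k' ℓ' : ℕ, 0 < k' → 0 < ℓ' →
      spow s (k' - 1) = spow s (k' + ℓ' - 1) →
      k < k' ∨ (k = k' ∧ ℓ ≤ ℓ'))
    (n : ℕ) (hn : 0 < n)
    (hidem : spow s (n - 1) * spow s (n - 1) = spow s (n - 1))
    (hnmin : ∀ m : ℕ, 0 < m →
      spow s (m - 1) * spow s (m - 1) = spow s (m - 1) → n ≤ m) :
    ∃ M : Auto A, M.WeaklyGood φ ∧ M.Deterministic ∧ M.Complete ∧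
      @Fintype.card M.Q M.fin = k + n :=
  one_generator_weaklyGood_general φ hφ s hs k hk n hn hidem
end

section
/- Let φ: Σ⁺ → S be a semigroup morphism to a finite semigroup S and let A be a φ-weakly-good automaton with N states. Then every word w ∈ Σ^∞ admits a Ramsey split of height at most N. Concretely, if h: (Q,<) → ({1,…,N},<) is the order-preserving bijection and q₀ →^{a₁} q₁ →^{a₂} q₂ ⋯ is the unique accepting run of A on w = a₁a₂⋯, then σ(i) = h(q_i) is a Ramsey split of w. -/
/-- `σ`-equivalence of positions `i, j` of a split `σ` (finite-word version):
`σ i = σ j` and no position between them has a larger `σ`-value. -/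
def SplitEquivFin {n : ℕ} (σ : Fin n → ℕ) (i j : Fin n) : Prop :=
  σ i = σ j ∧ ∀ k : Fin n, min i j ≤ k → k ≤ max i j → σ k ≤ σ i

/-- `σ`-equivalence of positions of a split of an infinite word. -/
def SplitEquivInf (σ : ℕ → ℕ) (i j : ℕ) : Prop :=
  σ i = σ j ∧ ∀ k : ℕ, min i j ≤ k → k ≤ max i j → σ k ≤ σ i

/-- The factor `w(i,j] = a_{i+1} ⋯ a_j` of a finite word `w = a₁a₂⋯`. -/
def sliceFin {A : Type} (w : List A) (i j : ℕ) : List A :=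
  (w.drop i).take (j - i)

/-- The factor `w(i,j]` of an infinite word `w`. -/
def sliceInf {A : Type} (w : ℕ → A) (i j : ℕ) : List A :=
  (List.range (j - i)).map fun t => w (i + t)

/-- A split `σ` of a finite word `w` is Ramsey for `φ`: the `φ`-images of
factors between `σ`-equivalent positions in the same class agree and are
idempotent. -/
def RamseyFin {A S : Type} [Semigroup S] (φ : List A → S) (w : List A)
    (σ : Fin (w.length + 1) → ℕ) : Prop :=
  ∀ i j i' j' : Fin (w.length + 1), i < j → i' < j' →
    SplitEquivFin σ i j → SplitEquivFin σ i' j' → SplitEquivFin σ i i' →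
    φ (sliceFin w (i : ℕ) (j : ℕ)) = φ (sliceFin w (i' : ℕ) (j' : ℕ)) ∧
    φ (sliceFin w (i : ℕ) (j : ℕ)) * φ (sliceFin w (i : ℕ) (j : ℕ)) =
      φ (sliceFin w (i : ℕ) (j : ℕ))

/-- A split `σ` of an infinite word `w` is Ramsey for `φ`. -/
def RamseyInf {A S : Type} [Semigroup S] (φ : List A → S) (w : ℕ → A)
    (σ : ℕ → ℕ) : Prop :=
  ∀ i j i' j' : ℕ, i < j → i' < j' →
    SplitEquivInf σ i j → SplitEquivInf σ i' j' → SplitEquivInf σ i i' →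
    φ (sliceInf w i j) = φ (sliceInf w i' j') ∧
    φ (sliceInf w i j) * φ (sliceInf w i j) = φ (sliceInf w i j)

section Aux

variable {A S : Type} [Semigroup S]

lemma sliceInf_append (w : ℕ → A) {i k j : ℕ} (h1 : i ≤ k) (h2 : k ≤ j) :
    sliceInf w i j = sliceInf w i k ++ sliceInf w k j := by
  unfold sliceInf
  rw [show j - i = (k - i) + (j - k) by omega, List.range_add, List.map_append,
    List.map_map]
  congr 1
  apply List.map_congr_left
  intro t _
  simp only [Function.comp]
  congr 1
  omega

lemma sliceInf_ne_nil (w : ℕ → A) {i j : ℕ} (h : i < j) : sliceInf w i j ≠ [] := by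
  simp only [sliceInf, ne_eq, List.map_eq_nil_iff, List.range_eq_nil]
  omega

lemma pathIn_of_run (M : Auto A) (X : Set M.Q) (w : ℕ → A) (ρ : ℕ → M.Q) :
    ∀ d, 0 < d → ∀ i, (∀ m, i ≤ m → m < i + d → M.trans (ρ m) (w m) (ρ (m+1))) →
      (∀ m, i < m → m < i + d → ρ m ∈ X) →
      M.pathIn X (ρ i) (sliceInf w i (i + d)) (ρ (i + d)) := by
  intro d
  induction d with
  | zero => omega
  | succ d ih =>
    intro _ i htr hX
    rcases Nat.eq_zero_or_pos d with h0 | hd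
    · subst h0
      have hs : sliceInf w i (i+1) = [w i] := by
        simp [sliceInf, List.range_succ]
      rw [hs]
      exact htr i le_rfl (by omega)
    · have hs : sliceInf w i (i + (d+1)) = w i :: sliceInf w (i+1) ((i+1) + d) := by
        unfold sliceInf
        rw [show i + (d+1) - i = d + 1 by omega, List.range_succ_eq_map]
        simp only [List.map_cons, List.map_map, Nat.add_zero]
        congr 1
        rw [show i + 1 + d - (i+1) = d by omega]
        apply List.map_congr_left
        intro t _
        simp only [Function.comp]
        congr 1
        omega
      rw [hs]
      have htail := ih hd (i+1) (fun m h1 h2 => htr m (by omega) (by omega))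
        (fun m h1 h2 => hX m (by omega) (by omega))
      have hne : sliceInf w (i+1) (i+1+d) ≠ [] := sliceInf_ne_nil w (by omega)
      obtain ⟨b, rest, hb⟩ := List.exists_cons_of_ne_nil hne
      rw [hb] at htail ⊢
      show ∃ r, r ∈ X ∧ M.trans (ρ i) (w i) r ∧ M.pathIn X r (b :: rest) (ρ (i + (d+1)))
      refine ⟨ρ (i+1), hX (i+1) (by omega) (by omega), htr i le_rfl (by omega), ?_⟩
      rw [show i + (d+1) = i + 1 + d by omega]
      exact htail

lemma phi_slice_eq (φ : List A → S)
    (hφ : ∀ u v : List A, u ≠ [] → v ≠ [] → φ (u ++ v) = φ u * φ v)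
    (M : Auto A)
    (h : M.Q → ℕ) (hmono : ∀ p q, M.slt p q → h p < h q)
    (w : ℕ → A) (ρ : ℕ → M.Q)
    (e : S) (he : e * e = e) (q : M.Q) (heq : ∀ u ∈ M.Lq q, φ u = e) :
    ∀ d, 0 < d → ∀ i, ρ i = q → ρ (i+d) = q →
      (∀ m, i ≤ m → m < i+d → M.trans (ρ m) (w m) (ρ (m+1))) →
      (∀ m, i < m → m < i+d → h (ρ m) ≤ h q) →
      φ (sliceInf w i (i+d)) = e := by
  letI := M.lin
  intro d
  induction d using Nat.strong_induction_on with
  | _ d ih =>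
    intro hd i hi hj htr hbound
    classical
    have hex : ∃ k, 0 < k ∧ k ≤ d ∧ ρ (i+k) = q := ⟨d, hd, le_rfl, hj⟩
    obtain ⟨k, hk0, hkd, hkq, hmin⟩ :
        ∃ k, 0 < k ∧ k ≤ d ∧ ρ (i+k) = q ∧ ∀ m, 0 < m → m < k → ρ (i+m) ≠ q := by
      refine ⟨Nat.find hex, (Nat.find_spec hex).1, (Nat.find_spec hex).2.1,
        (Nat.find_spec hex).2.2, fun m hm1 hm2 hc => ?_⟩
      have hd2 : Nat.find hex ≤ d := (Nat.find_spec hex).2.1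
      exact Nat.find_min hex hm2 ⟨hm1, by omega, hc⟩
    have hpath : M.pathIn (M.below q) (ρ i) (sliceInf w i (i+k)) (ρ (i+k)) := by
      apply pathIn_of_run M _ w ρ k hk0 i
        (fun m h1 h2 => htr m h1 (by omega))
      intro m h1 h2
      have hne : ρ m ≠ q := by
        have := hmin (m - i) (by omega) (by omega)
        rwa [show i + (m - i) = m by omega] at this
      have hle : h (ρ m) ≤ h q := hbound m h1 (by omega)
      rcases lt_trichotomy (ρ m) q with hlt | heqq | hgt
      · exact hlt
      · exact absurd heqq hne
      · exact absurd hle (not_le.mpr (hmono q (ρ m) hgt))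
    rw [hi, hkq] at hpath
    have h1 : φ (sliceInf w i (i+k)) = e := heq _ hpath
    rcases eq_or_lt_of_le hkd with hkeq | hklt
    · subst hkeq; exact h1
    · have hsplit : sliceInf w i (i+d) = sliceInf w i (i+k) ++ sliceInf w (i+k) (i+d) :=
        sliceInf_append w (by omega) (by omega)
      have h2 : φ (sliceInf w (i+k) (i+d)) = e := by
        have := ih (d - k) (by omega) (by omega) (i+k) hkq
          (by rw [show i + k + (d - k) = i + d by omega]; exact hj)
          (fun m hm1 hm2 => htr m (by omega) (by omega))
          (fun m hm1 hm2 => hbound m (by omega) (by omega))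
        rwa [show i + k + (d - k) = i + d by omega] at this
      rw [hsplit, hφ _ _ (sliceInf_ne_nil w (by omega)) (sliceInf_ne_nil w (by omega)),
        h1, h2]
      exact he

end Aux

lemma sliceFin_eq_sliceInf {A : Type} (w : List A) (d : A) {i j : ℕ}
    (hj : j ≤ w.length) :
    sliceFin w i j = sliceInf (fun n => w.getD n d) i j := by
  apply List.ext_getElem
  · simp only [sliceFin, sliceInf, List.length_take, List.length_drop,
      List.length_map, List.length_range]
    omega
  · intro n h1 h2
    simp only [sliceFin, sliceInf, List.length_take, List.length_drop,
      List.length_map, List.length_range] at h1 h2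
    simp only [sliceFin, sliceInf, List.getElem_take, List.getElem_drop,
      List.getElem_map, List.getElem_range]
    rw [List.getD_eq_getElem _ _ (by omega)]


/-- **Forest factorization derived.** If `A` is a `φ`-weakly-good automaton
with `N` states, `h` is the order-preserving bijection from its states onto
`{1, …, N}`, and `ρ` is the (unique) accepting run on a word `w`, then
`σ(i) = h(ρ i)` is a Ramsey split of `w` of height at most `N`. -/
theorem ramsey_split_of_weaklyGood {A S : Type} [Fintype A] [Semigroup S]
    [Fintype S] (φ : List A → S)
    (hφ : ∀ u v : List A, u ≠ [] → v ≠ [] → φ (u ++ v) = φ u * φ v)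
    (M : Auto A) (hM : M.WeaklyGood φ)
    (N : ℕ) (hN : @Fintype.card M.Q M.fin = N)
    (h : M.Q → ℕ)
    (hrange : ∀ q : M.Q, 1 ≤ h q ∧ h q ≤ N)
    (hsurj : ∀ m : ℕ, 1 ≤ m → m ≤ N → ∃ q : M.Q, h q = m)
    (hmono : ∀ p q : M.Q, M.slt p q → h p < h q) :
    (∀ (w : List A), w ≠ [] → ∀ ρ : Fin (w.length + 1) → M.Q,
      M.FinAccRun w ρ → RamseyFin φ w fun i => h (ρ i)) ∧
    (∀ (w : ℕ → A) (ρ : ℕ → M.Q),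
      M.InfAccRun w ρ → RamseyInf φ w fun i => h (ρ i)) := by
  letI := M.lin
  obtain ⟨hG1, hG2, hG3⟩ := hM
  have hinj : ∀ p q : M.Q, h p = h q → p = q := by
    intro p q hpq
    rcases lt_trichotomy p q with hlt | he | hgt
    · exact absurd hpq (by have := hmono p q hlt; omega)
    · exact he
    · exact absurd hpq (by have := hmono q p hgt; omega)
  constructor
  · -- finite words
    intro w hw ρ hρ i j i' j' hij hij' heq1 heq2 heq3
    have hlen : 0 < w.length := List.length_pos_iff.mpr hw
    set w' : ℕ → A := fun n => w.getD n (w.get ⟨0, hlen⟩) with hw'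
    set ρ' : ℕ → M.Q := fun n => ρ ⟨min n w.length, Nat.lt_succ_of_le (min_le_right _ _)⟩
      with hρ'def
    have hρ'' : ∀ p : Fin (w.length + 1), ρ' (p : ℕ) = ρ p := by
      intro p
      have := p.isLt
      simp only [hρ'def]
      congr 1
      apply Fin.ext
      simp only []
      omega
    have htr : ∀ m, m < w.length → M.trans (ρ' m) (w' m) (ρ' (m+1)) := by
      intro m hm
      have hT := hρ.2.1 ⟨m, hm⟩
      have e1 : ρ' m = ρ (Fin.castSucc ⟨m, hm⟩) := by
        simp only [hρ'def]; congr 1; apply Fin.ext; simp only [Fin.coe_castSucc]; omega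
      have e2 : w' m = w.get ⟨m, hm⟩ := by
        simp only [hw', List.get_eq_getElem]
        exact List.getD_eq_getElem _ _ hm
      have e3 : ρ' (m+1) = ρ (Fin.succ ⟨m, hm⟩) := by
        simp only [hρ'def]; congr 1; apply Fin.ext; simp only [Fin.val_succ]; omega
      rw [e1, e2, e3]; exact hT
    obtain ⟨e, he, heA⟩ := hG2 (ρ i)
    have key : ∀ a b : Fin (w.length + 1), a < b → ρ a = ρ i → ρ b = ρ i →
        (∀ k : Fin (w.length + 1), a ≤ k → k ≤ b → h (ρ k) ≤ h (ρ i)) →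
        φ (sliceFin w (a : ℕ) (b : ℕ)) = e := by
      intro a b hab ha hb hk
      have hab' : (a : ℕ) < (b : ℕ) := hab
      have hble : (b : ℕ) ≤ w.length := Nat.lt_succ_iff.mp b.isLt
      rw [sliceFin_eq_sliceInf w (w.get ⟨0, hlen⟩) hble,
        show (b : ℕ) = (a : ℕ) + ((b : ℕ) - (a : ℕ)) by omega]
      apply phi_slice_eq φ hφ M h hmono w' ρ' e he (ρ i) heA _ (by omega)
      · rw [hρ'' a]; exact ha
      · rw [show (a : ℕ) + ((b : ℕ) - (a : ℕ)) = (b : ℕ) by omega, hρ'' b]; exact hb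
      · intro m h1 h2
        exact htr m (by omega)
      · intro m h1 h2
        have hm : m < w.length + 1 := by omega
        have : ρ' m = ρ ⟨m, hm⟩ := by
          simp only [hρ'def]; congr 1; apply Fin.ext; simp only []; omega
        rw [this]
        exact hk ⟨m, hm⟩ (by rw [Fin.le_def]; simpa using by omega)
          (by rw [Fin.le_def]; simpa using by omega)
    have hqj : ρ j = ρ i := (hinj _ _ heq1.1).symm
    have hqi' : ρ i' = ρ i := hinj _ _ heq3.1.symm
    have hqj' : ρ j' = ρ i := by
      have := hinj _ _ heq2.1
      rw [← this, hqi']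
    have hb1 : ∀ k : Fin (w.length + 1), i ≤ k → k ≤ j → h (ρ k) ≤ h (ρ i) := by
      intro k h1 h2
      exact heq1.2 k (by rw [min_eq_left hij.le]; exact h1)
        (by rw [max_eq_right hij.le]; exact h2)
    have hb2 : ∀ k : Fin (w.length + 1), i' ≤ k → k ≤ j' → h (ρ k) ≤ h (ρ i) := by
      intro k h1 h2
      rw [← hqi']
      exact heq2.2 k (by rw [min_eq_left hij'.le]; exact h1)
        (by rw [max_eq_right hij'.le]; exact h2)
    have k1 : φ (sliceFin w (i : ℕ) (j : ℕ)) = e := key i j hij rfl hqj hb1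
    have k2 : φ (sliceFin w (i' : ℕ) (j' : ℕ)) = e := key i' j' hij' hqi' hqj' hb2
    exact ⟨by rw [k1, k2], by rw [k1]; exact he⟩
  · -- infinite words
    intro w ρ hρ i j i' j' hij hij' heq1 heq2 heq3
    obtain ⟨e, he, heA⟩ := hG2 (ρ i)
    have key : ∀ a b : ℕ, a < b → ρ a = ρ i → ρ b = ρ i →
        (∀ k : ℕ, a ≤ k → k ≤ b → h (ρ k) ≤ h (ρ i)) →
        φ (sliceInf w a b) = e := by
      intro a b hab ha hb hk
      rw [show b = a + (b - a) by omega]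
      apply phi_slice_eq φ hφ M h hmono w ρ e he (ρ i) heA _ (by omega)
      · exact ha
      · rw [show a + (b - a) = b by omega]; exact hb
      · intro m _ _; exact hρ.2.1 m
      · intro m h1 h2; exact hk m (by omega) (by omega)
    have hqj : ρ j = ρ i := (hinj _ _ heq1.1).symm
    have hqi' : ρ i' = ρ i := hinj _ _ heq3.1.symm
    have hqj' : ρ j' = ρ i := by
      have := hinj _ _ heq2.1
      rw [← this, hqi']
    have hb1 : ∀ k : ℕ, i ≤ k → k ≤ j → h (ρ k) ≤ h (ρ i) := by
      intro k h1 h2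
      exact heq1.2 k (by omega) (by omega)
    have hb2 : ∀ k : ℕ, i' ≤ k → k ≤ j' → h (ρ k) ≤ h (ρ i) := by
      intro k h1 h2
      rw [← hqi']
      exact heq2.2 k (by omega) (by omega)
    have k1 : φ (sliceInf w i j) = e := key i j hij rfl hqj hb1
    have k2 : φ (sliceInf w i' j') = e := key i' j' hij' hqi' hqj' hb2
    exact ⟨by rw [k1, k2], by rw [k1]; exact he⟩
end

section
/- Let φ: Σ⁺ → S be a semigroup morphism to a finite semigroup S and let A = (Q,Σ,Δ,ι,{f},R,<) be a φ-good automaton that is reduced (every state occurs on some accepting run). Then for all states p, q ∈ Q, every subset X ⊆ Q with x < p and x < q for all x ∈ X, and every s ∈ S, there exists an ε-free φ-good rational expression F over Σ with L(F) = L_{p,X,q} ∩ φ⁻¹(s). -/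
/-- Rational expressions: `∅ | ε | a | F∪F | F·F | F⁺`. -/
inductive RE (A : Type) where
  | zero : RE A
  | eps : RE A
  | char : A → RE A
  | union : RE A → RE A → RE A
  | cat : RE A → RE A → RE A
  | plus : RE A → RE A

namespace RE

variable {A : Type}

/-- The language denoted by a rational expression. -/
def lang : RE A → Set (List A)
  | zero => ∅
  | eps => {[]}
  | char a => {[a]}
  | union e f => lang e ∪ lang f
  | cat e f => {w | ∃ u v, u ∈ lang e ∧ v ∈ lang f ∧ w = u ++ v}
  | plus e => {w | ∃ l : List (List A), l ≠ [] ∧ (∀ u ∈ l, u ∈ lang e) ∧ w = l.flatten}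

/-- `ε` does not occur in the expression. -/
def epsFree : RE A → Prop
  | zero => True
  | eps => False
  | char _ => True
  | union e f => epsFree e ∧ epsFree f
  | cat e f => epsFree e ∧ epsFree f
  | plus e => epsFree e

/-- Every denoted word has a unique parse: unions are disjoint, and
concatenation / Kleene-plus decompositions are unique. -/
def Unambiguous : RE A → Prop
  | zero => True
  | eps => True
  | char _ => True
  | union e f => Unambiguous e ∧ Unambiguous f ∧ lang e ∩ lang f = ∅
  | cat e f => Unambiguous e ∧ Unambiguous f ∧
      ∀ u v u' v', u ∈ lang e → v ∈ lang f → u' ∈ lang e → v' ∈ lang f →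
        u ++ v = u' ++ v' → u = u' ∧ v = v'
  | plus e => Unambiguous e ∧
      ∀ l l' : List (List A), l ≠ [] → l' ≠ [] → (∀ u ∈ l, u ∈ lang e) →
        (∀ u ∈ l', u ∈ lang e) → l.flatten = l'.flatten → l = l'

/-- The subexpression relation. -/
inductive Sub : RE A → RE A → Prop
  | refl (e : RE A) : Sub e e
  | unionL {e f g : RE A} : Sub e f → Sub e (union f g)
  | unionR {e f g : RE A} : Sub e g → Sub e (union f g)
  | catL {e f g : RE A} : Sub e f → Sub e (cat f g)
  | catR {e f g : RE A} : Sub e g → Sub e (cat f g)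
  | plus {e f : RE A} : Sub e f → Sub e (plus f)

/-- `φ`-good expression: unambiguous, every subexpression maps to a single
semigroup element, and subexpressions under `⁺` map to an idempotent. -/
def Good {S : Type} [Semigroup S] (φ : List A → S) (F : RE A) : Prop :=
  F.Unambiguous ∧
  (∀ E : RE A, Sub E F → ∃ s : S, ∀ w ∈ E.lang, φ w = s) ∧
  (∀ E : RE A, Sub (RE.plus E) F → ∃ s : S, s * s = s ∧ ∀ w ∈ E.lang, φ w = s)

end RE

/-!
By (G1) and reducedness, every run between two states extends to an accepting run of a finite or
an infinite word, so `M` is unambiguous in the classical sense: a label determines the states a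
run between two given states passes through.

Induct on `X`, removing its largest state `r`; let `X'` be the rest. A path of `L_{p,X,q}` either
avoids `r` or splits at its first visit to `r` into a path of `L_{p,X',r}` and one of `L_{r,X,q}`,
and a path of `L_{r,X,q}` is a path of `L_{r,X',q}` preceded by zero or more loops of
`L_{r,X',r}`. Unambiguity makes these unions disjoint and these factorisations unique. By (G2)
all loops at `r` map to one idempotent, so they form a good Kleene plus, and splitting the products
over the pairs `(s₁, s₂)` with `s₁ s₂ = s` keeps every subexpression mapped to a single element.
-/

open Set

def plusLang {A : Type} (L : Set (List A)) : Set (List A) :=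
  {w | ∃ l : List (List A), l ≠ [] ∧ (∀ u ∈ l, u ∈ L) ∧ w = l.flatten}

namespace Auto

variable {A : Type} {M : Auto A} {X Y : Set M.Q} {p q r t t' f : M.Q} {a : A}
  {u u' v v' w z z' : List A} {ρ τ : ℕ → M.Q} {y : ℕ → A}

section Paths

theorem pathIn_ne_nil (h : M.pathIn X p w q) : w ≠ [] := by
  rintro rfl
  exact h

theorem pathIn_cons (hpt : M.trans p a t) (ht : t ∈ X) (h : M.pathIn X t w q) :
    M.pathIn X p (a :: w) q := by
  cases w with
  | nil => exact absurd rfl (pathIn_ne_nil h)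
  | cons b w => exact ⟨t, ht, hpt, h⟩

theorem pathIn.mono (hXY : X ⊆ Y) (h : M.pathIn X p w q) : M.pathIn Y p w q := by
  induction w generalizing p with
  | nil => exact absurd rfl (pathIn_ne_nil h)
  | cons a w ih =>
    cases w with
    | nil => exact h
    | cons b w =>
      obtain ⟨t, ht, hpt, h⟩ := h
      exact ⟨t, hXY ht, hpt, ih h⟩

theorem pathIn.append (hu : M.pathIn X p u r) (hv : M.pathIn X r v q) (hr : r ∈ X) :
    M.pathIn X p (u ++ v) q := by
  induction u generalizing p with
  | nil => exact absurd rfl (pathIn_ne_nil hu)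
  | cons a u ih =>
    cases u with
    | nil => exact pathIn_cons hu hr hv
    | cons b u =>
      obtain ⟨t, ht, hpt, hu⟩ := hu
      exact pathIn_cons hpt ht (ih hu)

theorem exists_of_pathIn_append (h : M.pathIn X p (u ++ v) q) (hu : u ≠ []) (hv : v ≠ []) :
    ∃ t ∈ X, M.pathIn X p u t ∧ M.pathIn X t v q := by
  obtain ⟨b, v, rfl⟩ := List.exists_cons_of_ne_nil hv
  induction u generalizing p with
  | nil => exact absurd rfl hu
  | cons a u ih =>
    cases u with
    | nil => exact h
    | cons c u =>
      obtain ⟨s, hs, hps, h⟩ := h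
      obtain ⟨t, ht, hst, htq⟩ := ih (List.cons_ne_nil _ _) h
      exact ⟨t, ht, pathIn_cons hps hs hst, htq⟩

theorem pathIn_flatten_append {l : List (List A)} (hl : ∀ m ∈ l, M.pathIn X r m r)
    (hz : M.pathIn X r z q) (hr : r ∈ X) : M.pathIn X r (l.flatten ++ z) q := by
  induction l with
  | nil => exact hz
  | cons m l ih =>
    rw [List.flatten_cons, List.append_assoc]
    exact (hl m (by simp)).append (ih fun m' hm' => hl m' (by simp [hm'])) hr

theorem pathIn_flatten {l : List (List A)} (hl : ∀ m ∈ l, M.pathIn X r m r) (hne : l ≠ [])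
    (hr : r ∈ X) : M.pathIn X r l.flatten r := by
  obtain ⟨L, b, rfl⟩ := (List.eq_nil_or_concat l).resolve_left hne
  rw [List.concat_eq_append, List.flatten_concat]
  exact pathIn_flatten_append (fun m hm => hl m (by simp [hm])) (hl b (by simp)) hr

theorem pathIn_empty_iff : M.pathIn ∅ p w q ↔ ∃ a, w = [a] ∧ M.trans p a q := by
  constructor
  · intro h
    rcases w with _ | ⟨a, _ | ⟨b, w⟩⟩
    · exact absurd rfl (pathIn_ne_nil h)
    · exact ⟨a, rfl, h⟩
    · obtain ⟨_, ht, -⟩ := h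
      exact ht.elim
  · rintro ⟨a, rfl, h⟩
    exact h

theorem pathIn_insert (h : M.pathIn (insert r X) p w q) :
    M.pathIn X p w q ∨ ∃ (u : List A) (l : List (List A)) (z : List A), M.pathIn X p u r ∧
      (∀ m ∈ l, M.pathIn X r m r) ∧ M.pathIn X r z q ∧ w = u ++ (l.flatten ++ z) := by
  induction w generalizing p with
  | nil => exact absurd rfl (pathIn_ne_nil h)
  | cons a w ih =>
    cases w with
    | nil => exact Or.inl h
    | cons b w =>
      obtain ⟨t, ht, hpt, h⟩ := h
      rcases mem_insert_iff.1 ht with rfl | ht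
      · right
        rcases ih h with h | ⟨u, l, z, hu, hl, hz, hw⟩
        · exact ⟨[a], [], b :: w, hpt, by simp, h, by simp⟩
        · refine ⟨[a], u :: l, z, hpt, ?_, hz, by simp [hw]⟩
          exact List.forall_mem_cons.2 ⟨hu, hl⟩
      · rcases ih h with h | ⟨u, l, z, hu, hl, hz, hw⟩
        · exact Or.inl (pathIn_cons hpt ht h)
        · exact Or.inr ⟨a :: u, l, z, pathIn_cons hpt ht hu, hl, hz, by rw [hw]; rfl⟩

theorem Lset_insert :
    M.Lset (insert r X) p q =
      M.Lset X p q ∪ image2 (· ++ ·) (M.Lset X p r) (M.Lset (insert r X) r q) := by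
  have hX : X ⊆ insert r X := subset_insert r X
  ext w
  constructor
  · intro h
    rcases pathIn_insert h with h | ⟨u, l, z, hu, hl, hz, rfl⟩
    · exact Or.inl h
    · exact Or.inr ⟨u, hu, l.flatten ++ z,
        pathIn_flatten_append (fun m hm => (hl m hm).mono hX) (hz.mono hX) (mem_insert r X), rfl⟩
  · rintro (h | ⟨u, hu, v, hv, rfl⟩)
    · exact pathIn.mono hX h
    · exact (pathIn.mono hX hu).append hv (mem_insert r X)

theorem Lset_insert_self :
    M.Lset (insert r X) r q =
      M.Lset X r q ∪ image2 (· ++ ·) (plusLang (M.Lset X r r)) (M.Lset X r q) := by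
  have hX : X ⊆ insert r X := subset_insert r X
  ext w
  constructor
  · intro h
    rcases pathIn_insert h with h | ⟨u, l, z, hu, hl, hz, rfl⟩
    · exact Or.inl h
    · refine Or.inr ⟨(u :: l).flatten, ⟨u :: l, List.cons_ne_nil _ _, ?_, rfl⟩, z, hz, by simp⟩
      exact List.forall_mem_cons.2 ⟨hu, hl⟩
  · rintro (h | ⟨_, ⟨l, -, hl, rfl⟩, z, hz, rfl⟩)
    · exact pathIn.mono hX h
    · exact pathIn_flatten_append (fun m hm => pathIn.mono hX (hl m hm)) (pathIn.mono hX hz)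
        (mem_insert r X)

end Paths

section Runs

def IsRun (M : Auto A) (w : List A) (ρ : ℕ → M.Q) : Prop :=
  ∀ i (h : i < w.length), M.trans (ρ i) w[i] (ρ (i + 1))

/-- `M.InfAccRun y τ` unfolds to `τ 0 = M.init ∧ M.IsBuchiRun y τ`. -/
def IsBuchiRun (M : Auto A) (y : ℕ → A) (τ : ℕ → M.Q) : Prop :=
  (∀ i, M.trans (τ i) (y i) (τ (i + 1))) ∧ ∀ n, ∃ m, n ≤ m ∧ τ m ∈ M.rep

theorem IsRun.cons (hpa : M.trans p a (ρ 0)) (h : M.IsRun w ρ) :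
    M.IsRun (a :: w) (Stream'.cons p ρ) := by
  rintro (_ | i) hi
  · exact hpa
  · exact h i (by simpa using hi)

theorem IsRun.take (h : M.IsRun w ρ) (k : ℕ) : M.IsRun (w.take k) ρ := fun i hi => by
  simpa using h i (by simp at hi; omega)

theorem IsRun.drop (h : M.IsRun w ρ) (k : ℕ) : M.IsRun (w.drop k) (fun i => ρ (k + i)) :=
  fun i hi => by simpa [Nat.add_assoc] using h (k + i) (by simp at hi; omega)

theorem exists_isRun_of_pathIn (h : M.pathIn X p w q) :
    ∃ ρ, M.IsRun w ρ ∧ ρ 0 = p ∧ ρ w.length = q := by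
  induction w generalizing p with
  | nil => exact absurd rfl (pathIn_ne_nil h)
  | cons a w ih =>
    cases w with
    | nil =>
      exact ⟨Stream'.cons p fun _ => q, IsRun.cons h fun i hi => absurd hi (by simp), rfl, rfl⟩
    | cons b w =>
      obtain ⟨t, -, hpt, h⟩ := h
      obtain ⟨ρ, hρ, rfl, hq⟩ := ih h
      exact ⟨Stream'.cons p ρ, hρ.cons hpt, rfl, hq⟩

theorem exists_isRun_of_pathIn_append (hu : M.pathIn X p u t) (hv : M.pathIn X t v q) :
    ∃ ρ, M.IsRun (u ++ v) ρ ∧ ρ 0 = p ∧ ρ u.length = t ∧ ρ (u ++ v).length = q := by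
  induction u generalizing p with
  | nil => exact absurd rfl (pathIn_ne_nil hu)
  | cons a u ih =>
    cases u with
    | nil =>
      obtain ⟨ρ, hρ, rfl, hq⟩ := exists_isRun_of_pathIn hv
      exact ⟨Stream'.cons p ρ, hρ.cons hu, rfl, rfl, hq⟩
    | cons b u =>
      obtain ⟨s, -, hps, hu⟩ := hu
      obtain ⟨ρ, hρ, rfl, ht, hq⟩ := ih hu
      exact ⟨Stream'.cons p ρ, hρ.cons hps, rfl, ht, hq⟩

theorem pathIn_of_isRun (h : M.IsRun w ρ) (hw : w ≠ []) : M.pathIn univ (ρ 0) w (ρ w.length) := by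
  induction w generalizing ρ with
  | nil => exact absurd rfl hw
  | cons a w ih =>
    cases w with
    | nil => exact h 0 (by simp)
    | cons b w =>
      have htail : M.IsRun (b :: w) (fun i => ρ (i + 1)) := fun i hi =>
        h (i + 1) (by simpa using hi)
      exact pathIn_cons (h 0 (by simp)) trivial (ih htail (List.cons_ne_nil _ _))

theorem IsRun.pathIn_append (h : M.IsRun w ρ) (hv : M.pathIn univ (ρ w.length) v t) :
    M.pathIn univ (ρ 0) (w ++ v) t := by
  rcases eq_or_ne w [] with rfl | hw
  · exact hv
  · exact (pathIn_of_isRun h hw).append hv trivial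

theorem IsRun.pathIn_append_left (h : M.IsRun w ρ) (hv : M.pathIn univ t v (ρ 0)) :
    M.pathIn univ t (v ++ w) (ρ w.length) := by
  rcases eq_or_ne w [] with rfl | hw
  · simpa using hv
  · exact hv.append (pathIn_of_isRun h hw) trivial

theorem IsBuchiRun.isRun_ofFn (h : M.IsBuchiRun y τ) (k : ℕ) :
    M.IsRun (List.ofFn fun j : Fin k => y j) τ :=
  fun i _ => by simpa using h.1 i

theorem IsBuchiRun.drop (h : M.IsBuchiRun y τ) (k : ℕ) :
    M.IsBuchiRun (fun n => y (k + n)) (fun n => τ (k + n)) := by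
  refine ⟨fun i => h.1 (k + i), fun n => ?_⟩
  obtain ⟨m, hm, hmr⟩ := h.2 (k + n)
  exact ⟨m - k, by omega, show τ (k + (m - k)) ∈ M.rep by rwa [Nat.add_sub_cancel' (by omega)]⟩

theorem IsRun.exists_isBuchiRun_append (h : M.IsRun w ρ) (hτ : M.IsBuchiRun y τ)
    (hρτ : ρ w.length = τ 0) :
    ∃ σ, M.IsBuchiRun (w ++ₛ y) σ ∧ ∀ n ≤ w.length, σ n = ρ n := by
  set σ : ℕ → M.Q := fun n => if n ≤ w.length then ρ n else τ (n - w.length)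
  have hσ : ∀ k, σ (w.length + k) = τ k := by
    rintro (_ | k)
    · simp [σ, hρτ]
    · simp [σ]
  refine ⟨σ, ⟨fun i => ?_, fun n => ?_⟩, fun n hn => if_pos hn⟩
  · rcases lt_or_ge i w.length with hi | hi
    · have hget : (w ++ₛ y) i = w[i] := Stream'.get_append_left i w y hi
      simpa [σ, hget, hi.le, Nat.succ_le_of_lt hi] using h i hi
    · obtain ⟨k, rfl⟩ := Nat.exists_eq_add_of_le hi
      have hget : (w ++ₛ y) (w.length + k) = y k := Stream'.get_append_right k w y
      rw [hget, hσ, Nat.add_assoc, hσ]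
      exact hτ.1 k
  · obtain ⟨m, hm, hmr⟩ := hτ.2 n
    exact ⟨w.length + m, by omega, by rwa [hσ]⟩

theorem FinAccRun.exists_isRun {ρ : Fin (w.length + 1) → M.Q} (h : M.FinAccRun w ρ) :
    ∃ ρ' : ℕ → M.Q, M.IsRun w ρ' ∧ (∀ i : Fin (w.length + 1), ρ' i = ρ i) ∧
      ρ' 0 = M.init ∧ ρ' w.length ∈ M.final := by
  obtain ⟨h0, htr, hf⟩ := h
  refine ⟨fun n => ρ (Fin.clamp n w.length), fun i hi => ?_,
    fun i => congrArg ρ (Fin.ext (by simp [Fin.clamp]; omega)),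
    (congrArg ρ (Fin.ext (by simp [Fin.clamp]))).trans h0,
    by simpa [Fin.clamp, Fin.last] using hf⟩
  have h1 : Fin.clamp i w.length = (⟨i, hi⟩ : Fin w.length).castSucc :=
    Fin.ext (by simp [Fin.clamp]; omega)
  have h2 : Fin.clamp (i + 1) w.length = (⟨i, hi⟩ : Fin w.length).succ :=
    Fin.ext (by simp [Fin.clamp]; omega)
  show M.trans (ρ (Fin.clamp i w.length)) w[i] (ρ (Fin.clamp (i + 1) w.length))
  rw [h1, h2]
  exact htr ⟨i, hi⟩

theorem finAccRun_of_isRun (h : M.IsRun w ρ) (h0 : ρ 0 = M.init) (hf : ρ w.length ∈ M.final) :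
    M.FinAccRun w fun i => ρ i :=
  ⟨h0, fun i => h i i.2, hf⟩

def Reduced (M : Auto A) : Prop :=
  ∀ q : M.Q,
    (∃ (w : List A) (ρ : Fin (w.length + 1) → M.Q),
      w ≠ [] ∧ M.FinAccRun w ρ ∧ ∃ i, ρ i = q) ∨
    (∃ (w : ℕ → A) (ρ : ℕ → M.Q), M.InfAccRun w ρ ∧ ∃ i, ρ i = q)

theorem Reduced.exists_prefix (hM : M.Reduced) (p : M.Q) :
    ∃ x : List A, ∀ ⦃v t⦄, M.pathIn univ p v t → M.pathIn univ M.init (x ++ v) t := by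
  rcases hM p with ⟨w, ρ, -, hρ, i, rfl⟩ | ⟨y, τ, ⟨hτ0, hτ⟩, i, rfl⟩
  · obtain ⟨ρ', hρ', hρρ', h0, -⟩ := hρ.exists_isRun
    refine ⟨w.take i, fun v t hv => h0 ▸ (hρ'.take i).pathIn_append ?_⟩
    rwa [List.length_take, min_eq_left (by omega), hρρ']
  · exact ⟨List.ofFn fun j : Fin i => y j, fun v t hv =>
      hτ0 ▸ (IsBuchiRun.isRun_ofFn hτ i).pathIn_append (by simpa using hv)⟩

theorem Reduced.exists_suffix (hM : M.Reduced) (q : M.Q) :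
    (∃ (y : List A) (f : M.Q), f ∈ M.final ∧
      ∀ ⦃v t⦄, M.pathIn univ t v q → M.pathIn univ t (v ++ y) f) ∨
    ∃ y τ, τ 0 = q ∧ M.IsBuchiRun y τ := by
  rcases hM q with ⟨w, ρ, -, hρ, i, rfl⟩ | ⟨y, τ, ⟨-, hτ⟩, i, rfl⟩
  · obtain ⟨ρ', hρ', hρρ', -, hf⟩ := hρ.exists_isRun
    refine Or.inl ⟨w.drop i, ρ' w.length, hf, fun v t hv => ?_⟩
    have := (hρ'.drop i).pathIn_append_left (v := v) (t := t) (by simpa [hρρ'] using hv)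
    rwa [List.length_drop, Nat.add_sub_cancel' (by omega)] at this
  · exact Or.inr ⟨fun n => y (i + n), fun n => τ (i + n), rfl, IsBuchiRun.drop hτ i⟩

end Runs

section Unambiguity

def Unambiguous (M : Auto A) : Prop :=
  ∀ ⦃p q t t' : M.Q⦄ ⦃u v : List A⦄, M.pathIn univ p u t → M.pathIn univ t v q →
    M.pathIn univ p u t' → M.pathIn univ t' v q → t = t'

theorem G1.eq_of_pathIn_final (hG1 : M.G1) (hu : M.pathIn univ M.init u t)
    (hv : M.pathIn univ t v f) (hu' : M.pathIn univ M.init u t') (hv' : M.pathIn univ t' v f)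
    (hf : f ∈ M.final) : t = t' := by
  obtain ⟨ρ, hρ, h0, hρt, hρf⟩ := exists_isRun_of_pathIn_append hu hv
  obtain ⟨ρ', hρ', h0', hρt', hρf'⟩ := exists_isRun_of_pathIn_append hu' hv'
  have hne : u ++ v ≠ [] := List.append_ne_nil_of_left_ne_nil (pathIn_ne_nil hu) v
  have := (hG1.1 _ hne).unique (finAccRun_of_isRun hρ h0 (hρf ▸ hf))
    (finAccRun_of_isRun hρ' h0' (hρf' ▸ hf))
  have := congrFun this ⟨u.length, by simp⟩
  rwa [← hρt, ← hρt']

theorem G1.eq_of_pathIn_buchi (hG1 : M.G1) {y : ℕ → A} {τ : ℕ → M.Q}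
    (hu : M.pathIn univ M.init u t) (hv : M.pathIn univ t v (τ 0))
    (hu' : M.pathIn univ M.init u t') (hv' : M.pathIn univ t' v (τ 0)) (hτ : M.IsBuchiRun y τ) :
    t = t' := by
  obtain ⟨ρ, hρ, h0, hρt, hρq⟩ := exists_isRun_of_pathIn_append hu hv
  obtain ⟨ρ', hρ', h0', hρt', hρq'⟩ := exists_isRun_of_pathIn_append hu' hv'
  obtain ⟨σ, hσ, hσρ⟩ := hρ.exists_isBuchiRun_append hτ hρq
  obtain ⟨σ', hσ', hσρ'⟩ := hρ'.exists_isBuchiRun_append hτ hρq'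
  have hu_le : u.length ≤ (u ++ v).length := by simp
  have := congrFun ((hG1.2 _).unique ⟨(hσρ 0 (by omega)).trans h0, hσ⟩
    ⟨(hσρ' 0 (by omega)).trans h0', hσ'⟩) u.length
  rwa [hσρ _ hu_le, hσρ' _ hu_le, hρt, hρt'] at this

theorem unambiguous_of_reduced (hG1 : M.G1) (hred : M.Reduced) : M.Unambiguous := by
  intro p q t t' u v hu hv hu' hv'
  obtain ⟨x, hx⟩ := hred.exists_prefix p
  rcases hred.exists_suffix q with ⟨y, f, hf, hy⟩ | ⟨y, τ, rfl, hτ⟩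
  · exact hG1.eq_of_pathIn_final (hx hu) (hy hv) (hx hu') (hy hv') hf
  · exact hG1.eq_of_pathIn_buchi (hx hu) hv (hx hu') hv' hτ

theorem Unambiguous.not_pathIn_append (hM : M.Unambiguous) (hr : r ∉ X)
    (hu : M.pathIn univ p u r) (hv : M.pathIn univ r v q) : ¬ M.pathIn X p (u ++ v) q := by
  intro h
  obtain ⟨t, ht, hpt, htq⟩ := exists_of_pathIn_append h (pathIn_ne_nil hu) (pathIn_ne_nil hv)
  exact hr (hM (hpt.mono (subset_univ X)) (htq.mono (subset_univ X)) hu hv ▸ ht)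

theorem Unambiguous.append_inj (hM : M.Unambiguous) (hr : r ∉ X) (hu : M.pathIn X p u r)
    (hu' : M.pathIn X p u' r) (hv : M.pathIn univ r v q) (hv' : M.pathIn univ r v' q)
    (h : u ++ v = u' ++ v') : u = u' ∧ v = v' := by
  -- unambiguity puts the path along `u ++ a`, which avoids `r` inside, at `r` after `u`
  have key : ∀ {u a v : List A}, M.pathIn univ p u r → M.pathIn X p (u ++ a) r →
      M.pathIn univ r (a ++ v) q → M.pathIn univ r v q → a = [] := by
    intro u a v hu hua hav hv
    by_contra ha
    obtain ⟨t, ht, hpt, hta⟩ := exists_of_pathIn_append hua (pathIn_ne_nil hu) ha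
    have htav : M.pathIn univ t (a ++ v) q := (hta.mono (subset_univ X)).append hv trivial
    exact hr (hM (hpt.mono (subset_univ X)) htav hu hav ▸ ht)
  rcases List.append_eq_append_iff.1 h with ⟨a, rfl, rfl⟩ | ⟨a, rfl, rfl⟩
  · obtain rfl := key (hu.mono (subset_univ X)) hu' hv hv'
    simp
  · obtain rfl := key (hu'.mono (subset_univ X)) hu hv' hv
    simp

theorem Unambiguous.flatten_append_inj (hM : M.Unambiguous) (hr : r ∉ X)
    {l l' : List (List A)} (hl : ∀ m ∈ l, M.pathIn X r m r) (hl' : ∀ m ∈ l', M.pathIn X r m r)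
    (hz : M.pathIn X r z q) (hz' : M.pathIn X r z' q) (h : l.flatten ++ z = l'.flatten ++ z') :
    l = l' ∧ z = z' := by
  have hU : ∀ {l : List (List A)} {z}, (∀ m ∈ l, M.pathIn X r m r) → M.pathIn X r z q →
      M.pathIn univ r (l.flatten ++ z) q := fun hl hz =>
    pathIn_flatten_append (fun m hm => (hl m hm).mono (subset_univ X)) (hz.mono (subset_univ X))
      trivial
  induction l generalizing l' with
  | nil =>
    cases l' with
    | nil => exact ⟨rfl, h⟩
    | cons m' l' =>
      rw [List.flatten_nil, List.nil_append, List.flatten_cons, List.append_assoc] at h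
      exact absurd (h ▸ hz) (hM.not_pathIn_append hr ((hl' m' (by simp)).mono (subset_univ X))
        (hU (fun m hm => hl' m (by simp [hm])) hz'))
  | cons m l ih =>
    cases l' with
    | nil =>
      rw [List.flatten_nil, List.nil_append, List.flatten_cons, List.append_assoc] at h
      exact absurd (h ▸ hz') (hM.not_pathIn_append hr ((hl m (by simp)).mono (subset_univ X))
        (hU (fun m hm => hl m (by simp [hm])) hz))
    | cons m' l' =>
      simp only [List.flatten_cons, List.append_assoc] at h
      have htl : ∀ x ∈ l, M.pathIn X r x r := fun x hx => hl x (by simp [hx])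
      have htl' : ∀ x ∈ l', M.pathIn X r x r := fun x hx => hl' x (by simp [hx])
      obtain ⟨rfl, hrest⟩ := hM.append_inj hr (hl m (by simp)) (hl' m' (by simp)) (hU htl hz)
        (hU htl' hz') h
      obtain ⟨rfl, rfl⟩ := ih htl htl' hrest
      exact ⟨rfl, rfl⟩

theorem Unambiguous.flatten_inj (hM : M.Unambiguous) (hr : r ∉ X) {l l' : List (List A)}
    (hne : l ≠ []) (hne' : l' ≠ []) (hl : ∀ m ∈ l, M.pathIn X r m r)
    (hl' : ∀ m ∈ l', M.pathIn X r m r) (h : l.flatten = l'.flatten) : l = l' := by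
  obtain ⟨L, b, rfl⟩ := (List.eq_nil_or_concat l).resolve_left hne
  obtain ⟨L', b', rfl⟩ := (List.eq_nil_or_concat l').resolve_left hne'
  simp only [List.concat_eq_append, List.flatten_concat] at h hl hl' ⊢
  obtain ⟨rfl, rfl⟩ := hM.flatten_append_inj hr (fun m hm => hl m (by simp [hm]))
    (fun m hm => hl' m (by simp [hm])) (hl b (by simp)) (hl' b' (by simp)) h
  rfl

end Unambiguity

end Auto

theorem RE.ne_nil_of_mem_lang {A : Type} :
    ∀ {F : RE A} {w : List A}, F.epsFree → w ∈ F.lang → w ≠ []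
  | .zero, _, _, hw => hw.elim
  | .eps, _, hε, _ => hε.elim
  | .char _, _, _, hw => by rw [Set.mem_singleton_iff.1 hw]; simp
  | .union _ _, _, ⟨hF, hG⟩, hw => hw.elim (ne_nil_of_mem_lang hF) (ne_nil_of_mem_lang hG)
  | .cat _ _, _, ⟨hF, _⟩, ⟨_, v, hu, _, rfl⟩ =>
    List.append_ne_nil_of_left_ne_nil (ne_nil_of_mem_lang hF hu) v
  | .plus F, _, hF, ⟨l, hl, hmem, rfl⟩ => by
    obtain ⟨m, l, rfl⟩ := List.exists_cons_of_ne_nil hl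
    exact List.append_ne_nil_of_left_ne_nil (ne_nil_of_mem_lang (F := F) hF (hmem m (by simp))) _

theorem apply_flatten_eq_of_idem {A S : Type} [Semigroup S] {φ : List A → S}
    (hφ : ∀ u v : List A, u ≠ [] → v ≠ [] → φ (u ++ v) = φ u * φ v) {e : S} (he : e * e = e) :
    ∀ {l : List (List A)}, l ≠ [] → (∀ u ∈ l, u ≠ [] ∧ φ u = e) → φ l.flatten = e
  | [u], _, h => by simpa using (h u (by simp)).2
  | u :: v :: l, _, h => by
    have hvl : ∀ x ∈ v :: l, x ≠ [] ∧ φ x = e := fun x hx => h x (List.mem_cons_of_mem u hx)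
    have hne : (v :: l).flatten ≠ [] :=
      List.append_ne_nil_of_left_ne_nil (hvl v (by simp)).1 _
    rw [List.flatten_cons, hφ _ _ (h u (by simp)).1 hne, (h u (by simp)).2,
      apply_flatten_eq_of_idem hφ he (List.cons_ne_nil v l) hvl, he]

def IsGoodLang {A S : Type} [Semigroup S] (φ : List A → S) (s : S) (L : Set (List A)) : Prop :=
  ∃ F : RE A, F.epsFree ∧ F.Good φ ∧ F.lang = L ∧ ∀ w ∈ L, φ w = s

namespace IsGoodLang

variable {A S : Type} [Semigroup S] {φ : List A → S} {s s₁ s₂ e : S} {w : List A}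
  {L L₁ L₂ : Set (List A)}

theorem ne_nil (h : IsGoodLang φ s L) (hw : w ∈ L) : w ≠ [] := by
  obtain ⟨F, hε, -, rfl, -⟩ := h
  exact RE.ne_nil_of_mem_lang hε hw

theorem apply_eq (h : IsGoodLang φ s L) (hw : w ∈ L) : φ w = s := by
  obtain ⟨-, -, -, -, hv⟩ := h
  exact hv w hw

theorem empty (s : S) : IsGoodLang φ s (∅ : Set (List A)) :=
  ⟨.zero, trivial, ⟨trivial, fun E hE => by cases hE; exact ⟨s, fun _ h => h.elim⟩,
    fun E hE => by cases hE⟩, rfl, fun _ h => h.elim⟩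

theorem singleton (a : A) : IsGoodLang φ (φ [a]) {[a]} :=
  ⟨.char a, trivial, ⟨trivial, fun E hE => by
    cases hE; exact ⟨φ [a], fun w hw => by rw [Set.mem_singleton_iff.1 hw]⟩,
    fun E hE => by cases hE⟩, rfl, fun w hw => by rw [Set.mem_singleton_iff.1 hw]⟩

theorem union (h₁ : IsGoodLang φ s L₁) (h₂ : IsGoodLang φ s L₂) (hd : Disjoint L₁ L₂) :
    IsGoodLang φ s (L₁ ∪ L₂) := by
  obtain ⟨F, hFε, ⟨hFu, hFs, hFp⟩, rfl, hFv⟩ := h₁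
  obtain ⟨G, hGε, ⟨hGu, hGs, hGp⟩, rfl, hGv⟩ := h₂
  have hv : ∀ w ∈ F.lang ∪ G.lang, φ w = s := fun w hw => hw.elim (hFv w) (hGv w)
  refine ⟨F.union G, ⟨hFε, hGε⟩, ⟨⟨hFu, hGu, Set.disjoint_iff_inter_eq_empty.1 hd⟩,
    fun E hE => ?_, fun E hE => ?_⟩, rfl, hv⟩
  · cases hE with
    | refl => exact ⟨s, hv⟩
    | unionL h => exact hFs E h
    | unionR h => exact hGs E h
  · cases hE with
    | unionL h => exact hFp E h
    | unionR h => exact hGp E h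

theorem biUnion {ι : Type*} (T : Finset ι) {L : ι → Set (List A)}
    (h : ∀ i ∈ T, IsGoodLang φ s (L i)) (hd : (T : Set ι).PairwiseDisjoint L) :
    IsGoodLang φ s (⋃ i ∈ T, L i) := by
  classical
  induction T using Finset.induction_on with
  | empty => simpa using empty s
  | insert i T hi ih =>
    rw [Finset.coe_insert, Set.pairwiseDisjoint_insert_of_notMem (by simpa)] at hd
    rw [Finset.set_biUnion_insert]
    exact (h i (Finset.mem_insert_self i T)).union
      (ih (fun j hj => h j (Finset.mem_insert_of_mem hj)) hd.1)
      (Set.disjoint_iUnion₂_right.2 hd.2)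

theorem append (hφ : ∀ u v : List A, u ≠ [] → v ≠ [] → φ (u ++ v) = φ u * φ v)
    (h₁ : IsGoodLang φ s₁ L₁) (h₂ : IsGoodLang φ s₂ L₂)
    (huniq : ∀ u v u' v', u ∈ L₁ → v ∈ L₂ → u' ∈ L₁ → v' ∈ L₂ → u ++ v = u' ++ v' →
      u = u' ∧ v = v') :
    IsGoodLang φ (s₁ * s₂) (Set.image2 (· ++ ·) L₁ L₂) := by
  have hv : ∀ w ∈ Set.image2 (· ++ ·) L₁ L₂, φ w = s₁ * s₂ := by
    rintro _ ⟨u, hu, v, hv, rfl⟩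
    rw [hφ u v (h₁.ne_nil hu) (h₂.ne_nil hv), h₁.apply_eq hu, h₂.apply_eq hv]
  obtain ⟨F, hFε, ⟨hFu, hFs, hFp⟩, rfl, -⟩ := h₁
  obtain ⟨G, hGε, ⟨hGu, hGs, hGp⟩, rfl, -⟩ := h₂
  have hlang : (F.cat G).lang = Set.image2 (· ++ ·) F.lang G.lang := by
    ext w
    simp only [RE.lang, Set.mem_image2]
    exact ⟨fun ⟨u, v, hu, hv, h⟩ => ⟨u, hu, v, hv, h.symm⟩,
      fun ⟨u, hu, v, hv, h⟩ => ⟨u, v, hu, hv, h.symm⟩⟩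
  refine ⟨F.cat G, ⟨hFε, hGε⟩, ⟨⟨hFu, hGu, huniq⟩, fun E hE => ?_, fun E hE => ?_⟩, hlang, hv⟩
  · cases hE with
    | refl => exact ⟨_, hlang ▸ hv⟩
    | catL h => exact hFs E h
    | catR h => exact hGs E h
  · cases hE with
    | catL h => exact hFp E h
    | catR h => exact hGp E h

theorem plus (hφ : ∀ u v : List A, u ≠ [] → v ≠ [] → φ (u ++ v) = φ u * φ v)
    (h : IsGoodLang φ e L) (he : e * e = e)
    (huniq : ∀ l l' : List (List A), l ≠ [] → l' ≠ [] → (∀ u ∈ l, u ∈ L) →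
      (∀ u ∈ l', u ∈ L) → l.flatten = l'.flatten → l = l') :
    IsGoodLang φ e (plusLang L) := by
  have hv : ∀ w ∈ plusLang L, φ w = e := by
    rintro _ ⟨l, hl, hmem, rfl⟩
    exact apply_flatten_eq_of_idem hφ he hl fun u hu =>
      ⟨h.ne_nil (hmem u hu), h.apply_eq (hmem u hu)⟩
  obtain ⟨F, hε, ⟨hFu, hFs, hFp⟩, rfl, hFv⟩ := h
  refine ⟨F.plus, hε, ⟨⟨hFu, huniq⟩, fun E hE => ?_, fun E hE => ?_⟩, rfl, hv⟩
  · cases hE with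
    | refl => exact ⟨e, hv⟩
    | plus h => exact hFs E h
  · cases hE with
    | refl => exact ⟨e, he, hFv⟩
    | plus h => exact hFp E h

theorem inter_preimage (h : IsGoodLang φ e L) (s : S) : IsGoodLang φ s (L ∩ φ ⁻¹' {s}) := by
  by_cases hs : s = e
  · rwa [hs, Set.inter_eq_left.2 (show L ⊆ φ ⁻¹' {e} from fun w hw => h.apply_eq hw)]
  · convert empty s
    exact Set.eq_empty_of_forall_notMem fun w hw => hs (hw.2.symm.trans (h.apply_eq hw.1))

theorem union_image2_inter_preimage [Fintype S]
    (hφ : ∀ u v : List A, u ≠ [] → v ≠ [] → φ (u ++ v) = φ u * φ v)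
    {L₀ : Set (List A)} (h₀ : IsGoodLang φ s (L₀ ∩ φ ⁻¹' {s}))
    (h₁ : ∀ s, IsGoodLang φ s (L₁ ∩ φ ⁻¹' {s})) (h₂ : ∀ s, IsGoodLang φ s (L₂ ∩ φ ⁻¹' {s}))
    (huniq : ∀ u v u' v', u ∈ L₁ → v ∈ L₂ → u' ∈ L₁ → v' ∈ L₂ → u ++ v = u' ++ v' →
      u = u' ∧ v = v')
    (hd : Disjoint L₀ (Set.image2 (· ++ ·) L₁ L₂)) :
    IsGoodLang φ s ((L₀ ∪ Set.image2 (· ++ ·) L₁ L₂) ∩ φ ⁻¹' {s}) := by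
  classical
  set T := Finset.univ.filter fun t : S × S => t.1 * t.2 = s
  set P : S × S → Set (List A) := fun t =>
    Set.image2 (· ++ ·) (L₁ ∩ φ ⁻¹' {t.1}) (L₂ ∩ φ ⁻¹' {t.2})
  have hmul : ∀ u ∈ L₁, ∀ v ∈ L₂, φ (u ++ v) = φ u * φ v := fun u hu v hv =>
    hφ u v ((h₁ (φ u)).ne_nil ⟨hu, rfl⟩) ((h₂ (φ v)).ne_nil ⟨hv, rfl⟩)
  have hsplit : (L₀ ∪ Set.image2 (· ++ ·) L₁ L₂) ∩ φ ⁻¹' {s} =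
      L₀ ∩ φ ⁻¹' {s} ∪ ⋃ t ∈ T, P t := by
    ext w
    simp only [Set.mem_inter_iff, Set.mem_union, Set.mem_image2, Set.mem_iUnion,
      Set.mem_preimage, Set.mem_singleton_iff, Finset.mem_filter, Finset.mem_univ, true_and,
      exists_prop, P, T]
    constructor
    · rintro ⟨h | ⟨u, hu, v, hv, rfl⟩, hs⟩
      · exact Or.inl ⟨h, hs⟩
      · exact Or.inr ⟨(φ u, φ v), (hmul u hu v hv).symm.trans hs, u, ⟨hu, rfl⟩, v, ⟨hv, rfl⟩, rfl⟩
    · rintro (h | ⟨t, ht, u, ⟨hu, hut⟩, v, ⟨hv, hvt⟩, rfl⟩)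
      · exact ⟨Or.inl h.1, h.2⟩
      · exact ⟨Or.inr ⟨u, hu, v, hv, rfl⟩, by rw [hmul u hu v hv, hut, hvt, ht]⟩
  rw [hsplit]
  refine h₀.union (IsGoodLang.biUnion T (fun t ht => ?_) ?_) ?_
  · rw [← (Finset.mem_filter.1 ht).2]
    exact (h₁ t.1).append hφ (h₂ t.2) fun u v u' v' hu hv hu' hv' =>
      huniq u v u' v' hu.1 hv.1 hu'.1 hv'.1
  · rintro t - t' - htt'
    refine Set.disjoint_left.2 ?_
    rintro _ ⟨u, ⟨hu, hut⟩, v, ⟨hv, hvt⟩, rfl⟩ ⟨u', ⟨hu', hut'⟩, v', ⟨hv', hvt'⟩, huv⟩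
    obtain ⟨rfl, rfl⟩ := huniq u' v' u v hu' hv' hu hv huv
    exact htt' (Prod.ext (hut.symm.trans hut') (hvt.symm.trans hvt'))
  · refine Disjoint.mono Set.inter_subset_left ?_ hd
    simp only [Set.iUnion_subset_iff]
    rintro t - _ ⟨u, hu, v, hv, rfl⟩
    exact ⟨u, hu.1, v, hv.1, rfl⟩

end IsGoodLang

section StateElimination

variable {A S : Type} [Semigroup S] {φ : List A → S} {M : Auto A} {X : Set M.Q}
  {p q r : M.Q}

theorem isGoodLang_Lset_insert_self [Fintype S]
    (hφ : ∀ u v : List A, u ≠ [] → v ≠ [] → φ (u ++ v) = φ u * φ v)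
    (hM : M.Unambiguous) (hG2 : M.G2 φ) (hXr : ∀ x ∈ X, M.slt x r)
    (hrr : ∀ s, IsGoodLang φ s (M.Lset X r r ∩ φ ⁻¹' {s}))
    (hrq : ∀ s, IsGoodLang φ s (M.Lset X r q ∩ φ ⁻¹' {s})) (s : S) :
    IsGoodLang φ s (M.Lset (insert r X) r q ∩ φ ⁻¹' {s}) := by
  let _ := M.lin
  have hr : r ∉ X := fun h => lt_irrefl r (hXr r h)
  obtain ⟨e, he, hloop⟩ := hG2 r
  have hloops : M.Lset X r r ∩ φ ⁻¹' {e} = M.Lset X r r :=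
    Set.inter_eq_left.2 fun w hw => hloop w (Auto.pathIn.mono hXr hw)
  have hplus : IsGoodLang φ e (plusLang (M.Lset X r r)) :=
    (hloops ▸ hrr e).plus hφ he fun _ _ => hM.flatten_inj hr
  rw [Auto.Lset_insert_self]
  refine IsGoodLang.union_image2_inter_preimage hφ (hrq s) hplus.inter_preimage hrq ?_ ?_
  · rintro _ z _ z' ⟨l, -, hl, rfl⟩ hz ⟨l', -, hl', rfl⟩ hz' h
    obtain ⟨rfl, rfl⟩ := hM.flatten_append_inj hr hl hl' hz hz' h
    exact ⟨rfl, rfl⟩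
  · refine Set.disjoint_left.2 ?_
    rintro w hw ⟨_, ⟨l, hl, hm, rfl⟩, z, hz, rfl⟩
    exact hM.not_pathIn_append hr
      (Auto.pathIn_flatten (fun m h => Auto.pathIn.mono (subset_univ X) (hm m h)) hl trivial)
      (Auto.pathIn.mono (subset_univ X) hz) hw

theorem isGoodLang_Lset_insert [Fintype S]
    (hφ : ∀ u v : List A, u ≠ [] → v ≠ [] → φ (u ++ v) = φ u * φ v)
    (hM : M.Unambiguous) (hr : r ∉ X) {s : S} (hpq : IsGoodLang φ s (M.Lset X p q ∩ φ ⁻¹' {s}))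
    (hpr : ∀ s, IsGoodLang φ s (M.Lset X p r ∩ φ ⁻¹' {s}))
    (hrq : ∀ s, IsGoodLang φ s (M.Lset (insert r X) r q ∩ φ ⁻¹' {s})) :
    IsGoodLang φ s (M.Lset (insert r X) p q ∩ φ ⁻¹' {s}) := by
  rw [Auto.Lset_insert]
  refine IsGoodLang.union_image2_inter_preimage hφ hpq hpr hrq
    (fun u v u' v' hu hv hu' hv' => hM.append_inj hr hu hu'
      (Auto.pathIn.mono (subset_univ _) hv) (Auto.pathIn.mono (subset_univ _) hv')) ?_
  refine Set.disjoint_left.2 ?_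
  rintro w hw ⟨u, hu, v, hv, rfl⟩
  exact hM.not_pathIn_append hr (Auto.pathIn.mono (subset_univ X) hu)
    (Auto.pathIn.mono (subset_univ _) hv) hw

theorem isGoodLang_Lset_empty [Fintype A] (p q : M.Q) (s : S) :
    IsGoodLang φ s (M.Lset ∅ p q ∩ φ ⁻¹' {s}) := by
  classical
  have hL : M.Lset ∅ p q ∩ φ ⁻¹' {s} =
      ⋃ a ∈ Finset.univ.filter (fun a => M.trans p a q ∧ φ [a] = s), {[a]} := by
    ext w
    simp only [Auto.Lset, Set.mem_inter_iff, Set.mem_ofPred_eq, Auto.pathIn_empty_iff,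
      Set.mem_preimage, Set.mem_singleton_iff, Set.mem_iUnion, Finset.mem_filter,
      Finset.mem_univ, true_and, exists_prop]
    constructor
    · rintro ⟨⟨a, rfl, ha⟩, hs⟩
      exact ⟨a, ⟨ha, hs⟩, rfl⟩
    · rintro ⟨a, ⟨ha, hs⟩, rfl⟩
      exact ⟨⟨a, rfl, ha⟩, hs⟩
  rw [hL]
  refine IsGoodLang.biUnion _ (fun a ha => ?_) fun a _ b _ hab => ?_
  · rw [← (Finset.mem_filter.1 ha).2.2]
    exact IsGoodLang.singleton a
  · simpa using hab

theorem isGoodLang_Lset [Fintype A] [Fintype S]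
    (hφ : ∀ u v : List A, u ≠ [] → v ≠ [] → φ (u ++ v) = φ u * φ v)
    (hM : M.Unambiguous) (hG2 : M.G2 φ) (X : Set M.Q) :
    ∀ p q s, (∀ x ∈ X, M.slt x p ∧ M.slt x q) →
      IsGoodLang φ s (M.Lset X p q ∩ φ ⁻¹' {s}) := by
  classical
  let _ := M.lin
  let _ := M.fin
  obtain ⟨X, rfl⟩ : ∃ Y : Finset M.Q, ↑Y = X := ⟨X.toFinset, X.coe_toFinset⟩
  induction X using Finset.induction_on_max with
  | empty => exact fun p q s _ => by simpa using isGoodLang_Lset_empty p q s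
  | insert r X hXr ih =>
    intro p q s hX
    simp only [Finset.coe_insert, Set.forall_mem_insert] at hX ⊢
    have hrq := isGoodLang_Lset_insert_self hφ hM hG2 hXr
      (fun s => ih r r s fun x hx => ⟨hXr x hx, hXr x hx⟩)
      (fun s => ih r q s fun x hx => ⟨hXr x hx, (hX.2 x hx).2⟩)
    exact isGoodLang_Lset_insert hφ hM (fun h => lt_irrefl r (hXr r h)) (ih p q s hX.2)
      (fun s => ih p r s fun x hx => ⟨(hX.2 x hx).1, hXr x hx⟩) hrq

end StateElimination

/-- **Good automata to good expressions (state elimination).** If `M` is a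
reduced `φ`-good automaton then for all states `p, q`, every set `X` of states
strictly below both `p` and `q`, and every `s ∈ S`, there is an `ε`-free
`φ`-good rational expression denoting `L_{p,X,q} ∩ φ⁻¹(s)`. -/
theorem good_expression_of_good_automaton {A S : Type} [Fintype A]
    [Semigroup S] [Fintype S] (φ : List A → S)
    (hφ : ∀ u v : List A, u ≠ [] → v ≠ [] → φ (u ++ v) = φ u * φ v)
    (M : Auto A) (hM : M.Good φ)
    (hred : ∀ q : M.Q,
      (∃ (w : List A) (ρ : Fin (w.length + 1) → M.Q),
        w ≠ [] ∧ M.FinAccRun w ρ ∧ ∃ i, ρ i = q) ∨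
      (∃ (w : ℕ → A) (ρ : ℕ → M.Q), M.InfAccRun w ρ ∧ ∃ i, ρ i = q)) :
    ∀ (p q : M.Q) (X : Set M.Q) (s : S),
      (∀ x ∈ X, M.slt x p ∧ M.slt x q) →
      ∃ F : RE A, F.epsFree ∧ F.Good φ ∧
        F.lang = {w : List A | w ∈ M.Lset X p q ∧ φ w = s} := by
  intro p q X s hX
  obtain ⟨F, hε, hF, hL, -⟩ := isGoodLang_Lset hφ (Auto.unambiguous_of_reduced hM.1.1 hred)
    hM.1.2.1 X p q s hX
  exact ⟨F, hε, hF, hL⟩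
end

section
/- Let Σ be a finite alphabet partitioned as Σ = Σ₁ ⊎ Σ₂. Every nonempty finite word w ∈ Σ⁺ admits a unique factorization w = v₀v₁⋯v_n with n ≥ 0, where v₀ ∈ ΣΣ₁*, v_i ∈ Σ₂ΣΣ₁* for all 1 ≤ i < n, and v_n ∈ Σ₂ΣΣ₁* ∪ Σ₂ when n ≥ 1; that is, the first block consists of one arbitrary letter followed by letters of Σ₁, each subsequent block consists of one letter of Σ₂, one arbitrary letter, then letters of Σ₁, except that the last block may consist of a single letter of Σ₂. -/
open Classical in
/-- Split the remainder into blocks: singleton `[b]`, or `b :: a :: (maximal non-S2 run)`. -/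
noncomputable def blocksAux {A : Type} (S2 : Set A) : List A → List (List A)
  | [] => []
  | [b] => [[b]]
  | b :: a :: t =>
      (b :: a :: t.takeWhile (fun x => decide (x ∉ S2))) ::
        blocksAux S2 (t.dropWhile (fun x => decide (x ∉ S2)))
termination_by l => l.length
decreasing_by
  simp only [List.length_cons]
  have := (List.dropWhile_sublist (l := t) (p := fun x => decide (x ∉ S2))).length_le
  omega

section
variable {A : Type} (S2 : Set A)

open Classical

lemma takeWhile_append_cons (p : A → Bool) (u : List A) (hu : ∀ x ∈ u, p x = true)
    (b : A) (hb : p b = false) (m : List A) :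
    (u ++ b :: m).takeWhile p = u ∧ (u ++ b :: m).dropWhile p = b :: m := by
  induction u with
  | nil => simp [List.takeWhile_cons, List.dropWhile_cons, hb]
  | cons c cs ih =>
    have hc : p c = true := hu c (by simp)
    have := ih (fun x hx => hu x (by simp [hx]))
    simp [List.takeWhile_cons, List.dropWhile_cons, hc, this.1, this.2]

lemma blocksAux_flatten : ∀ r : List A, (blocksAux S2 r).flatten = r := by
  intro r
  induction r using blocksAux.induct S2 with
  | case1 => simp [blocksAux]
  | case2 b => simp [blocksAux]
  | case3 b a t ih =>
    rw [blocksAux]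
    simp only [List.flatten_cons, List.cons_append, ih,
      List.takeWhile_append_dropWhile]

lemma blocksAux_eq_nil_iff (r : List A) : blocksAux S2 r = [] ↔ r = [] := by
  match r with
  | [] => simp [blocksAux]
  | [b] => simp [blocksAux]
  | b :: a :: t => rw [blocksAux]; simp

/-- TwoForm -/
def TwoForm (v : List A) : Prop :=
  ∃ (b : A) (a : A) (u : List A), v = b :: a :: u ∧ b ∈ S2 ∧ ∀ x ∈ u, x ∉ S2

def SingleForm (v : List A) : Prop := ∃ b : A, v = [b] ∧ b ∈ S2

lemma head_dropWhile_mem (t : List A) (c : A) (cs : List A)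
    (h : t.dropWhile (fun x => decide (x ∉ S2)) = c :: cs) : c ∈ S2 := by
  induction t with
  | nil => simp at h
  | cons d ds ih =>
    rw [List.dropWhile_cons] at h
    cases hpd : decide (d ∉ S2) with
    | true => rw [hpd, if_pos rfl] at h; exact ih h
    | false =>
      rw [hpd, if_neg Bool.false_ne_true] at h
      injection h with h1 _
      subst h1
      simpa using hpd

lemma head?_dropWhile_mem (t : List A) (c : A)
    (h : (t.dropWhile (fun x => decide (x ∉ S2))).head? = some c) : c ∈ S2 := by
  cases heq : t.dropWhile (fun x => decide (x ∉ S2)) with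
  | nil => rw [heq] at h; exact absurd h (by simp)
  | cons d ds =>
    rw [heq] at h
    simp only [List.head?_cons, Option.some.injEq] at h
    exact h ▸ head_dropWhile_mem S2 t d ds heq

lemma blocksAux_forms : ∀ r : List A, (∀ b, r.head? = some b → b ∈ S2) →
    (∀ v ∈ (blocksAux S2 r).dropLast, TwoForm S2 v) ∧
    (∀ v, (blocksAux S2 r).getLast? = some v → TwoForm S2 v ∨ SingleForm S2 v) := by
  intro r
  induction r using blocksAux.induct S2 with
  | case1 => simp [blocksAux]
  | case2 b =>
    intro hg
    refine ⟨by simp [blocksAux], ?_⟩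
    intro v hv
    simp [blocksAux] at hv
    exact Or.inr ⟨b, hv.symm, hg b rfl⟩
  | case3 b a t ih =>
    intro hg
    have hb : b ∈ S2 := hg b rfl
    have htf : TwoForm S2 (b :: a :: t.takeWhile (fun x => decide (x ∉ S2))) :=
      ⟨b, a, _, rfl, hb, fun x hx => by
        have := List.mem_takeWhile_imp hx
        simpa using this⟩
    have hgood : ∀ c, (t.dropWhile (fun x => decide (x ∉ S2))).head? = some c → c ∈ S2 :=
      fun c hc => head?_dropWhile_mem S2 t c hc
    obtain ⟨ih1, ih2⟩ := ih hgood
    rw [blocksAux]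
    by_cases hnil : blocksAux S2 (t.dropWhile (fun x => decide (x ∉ S2))) = []
    · rw [hnil]
      refine ⟨by simp, fun v hv => ?_⟩
      rw [List.getLast?_singleton] at hv
      injection hv with hv
      exact Or.inl (hv ▸ htf)
    · constructor
      · rw [List.dropLast_cons_of_ne_nil hnil]
        intro v hv
        rcases List.mem_cons.mp hv with h | h
        · exact h ▸ htf
        · exact ih1 v h
      · intro v hv
        obtain ⟨d, ds, hds⟩ := List.exists_cons_of_ne_nil hnil
        rw [hds, List.getLast?_cons_cons] at hv
        exact ih2 v (by rw [hds]; exact hv)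

lemma flatten_head (vs : List (List A)) (b : A) (u : List A) (rest : List (List A))
    (h : vs = (b :: u) :: rest) : ∃ m, vs.flatten = b :: m := by
  subst h; exact ⟨u ++ rest.flatten, by simp⟩

lemma exists_head_form (v' : List A) (h : TwoForm S2 v' ∨ SingleForm S2 v') :
    ∃ b' u', v' = b' :: u' ∧ b' ∈ S2 := by
  rcases h with ⟨b', a', u', he, hb', _⟩ | ⟨b', he, hb'⟩
  · exact ⟨b', a' :: u', he, hb'⟩
  · exact ⟨b', [], he, hb'⟩

lemma blocks_unique : ∀ vs : List (List A),
    (∀ v ∈ vs.dropLast, TwoForm S2 v) →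
    (∀ v, vs.getLast? = some v → TwoForm S2 v ∨ SingleForm S2 v) →
    vs = blocksAux S2 vs.flatten := by
  intro vs
  induction vs with
  | nil => intro _ _; simp [blocksAux]
  | cons v vs' ih =>
    intro h1 h2
    cases hvs' : vs' with
    | nil =>
      subst hvs'
      rcases h2 v (by simp) with ⟨b, a, u, hv, hb, hu⟩ | ⟨b, hv, hb⟩
      · subst hv
        have hu' : ∀ x ∈ u, (fun x => decide (x ∉ S2)) x = true := by
          intro x hx; simpa using hu x hx
        rw [List.flatten_cons, List.flatten_nil, List.append_nil, blocksAux]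
        rw [List.takeWhile_eq_self_iff.mpr hu', List.dropWhile_eq_nil_iff.mpr hu']
        simp [blocksAux]
      · subst hv; simp [blocksAux]
    | cons v' vs'' =>
      subst hvs'
      have hvne : (v' :: vs'' : List (List A)) ≠ [] := by simp
      have hdl : (v :: v' :: vs'').dropLast = v :: (v' :: vs'').dropLast :=
        List.dropLast_cons_of_ne_nil hvne
      have hvTwo : TwoForm S2 v := h1 v (by rw [hdl]; simp)
      obtain ⟨b, a, u, hv, hb, hu⟩ := hvTwo
      -- v' starts with an element of S2
      have hv' : TwoForm S2 v' ∨ SingleForm S2 v' := by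
        cases hvs'' : vs'' with
        | nil =>
          exact h2 v' (by rw [hvs'']; simp)
        | cons w ws =>
          left
          apply h1 v'
          rw [hdl, hvs'']
          rw [List.dropLast_cons_of_ne_nil (by simp)]
          simp
      obtain ⟨b', u', hv'eq, hb'⟩ := exists_head_form S2 v' hv'
      obtain ⟨m, hm⟩ : ∃ m, (v' :: vs'').flatten = b' :: m :=
        flatten_head (v' :: vs'') b' u' vs'' (by rw [hv'eq])
      have ihr : (v' :: vs'' : List (List A)) = blocksAux S2 (v' :: vs'').flatten := by
        apply ih
        · intro x hx; exact h1 x (by rw [hdl]; simp [hx])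
        · intro x hx; exact h2 x (by rwa [List.getLast?_cons_cons])
      have hu' : ∀ x ∈ u, (fun x => decide (x ∉ S2)) x = true := by
        intro x hx; simpa using hu x hx
      have hb'f : (fun x => decide (x ∉ S2)) b' = false := by
        simp [hb']
      obtain ⟨ht, hd⟩ := takeWhile_append_cons (fun x => decide (x ∉ S2)) u hu' b' hb'f m
      rw [hv, List.flatten_cons, List.cons_append, List.cons_append, hm, blocksAux, ht, hd,
        ← hm, ← ihr]

/-- **Unique factorization for the second inductive case.** For a partition
`Σ = Σ₁ ⊎ Σ₂` (here `S2 = Σ₂`, `Σ₁ = Σ \ S2`), every nonempty word `w` factors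
uniquely as `w = v₀ v₁ ⋯ vₙ` with `n ≥ 0`, where `v₀ ∈ ΣΣ₁*`, each `vᵢ`
(`1 ≤ i < n`) is in `Σ₂ΣΣ₁*`, and when `n ≥ 1` the last block `vₙ` is in
`Σ₂ΣΣ₁* ∪ Σ₂`. -/
theorem unique_factorization_blocks_left {A : Type} [Fintype A] (S2 : Set A)
    (w : List A) (hw : w ≠ []) :
    ∃! vs : List (List A),
      vs ≠ [] ∧ w = vs.flatten ∧
      (∀ v : List A, vs.head? = some v →
        ∃ (a : A) (u : List A), v = a :: u ∧ ∀ x ∈ u, x ∉ S2) ∧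
      (∀ v ∈ vs.tail.dropLast, ∃ (b : A) (a : A) (u : List A),
        v = b :: a :: u ∧ b ∈ S2 ∧ ∀ x ∈ u, x ∉ S2) ∧
      (vs.tail ≠ [] → ∀ v : List A, vs.getLast? = some v →
        ((∃ (b : A) (a : A) (u : List A),
            v = b :: a :: u ∧ b ∈ S2 ∧ ∀ x ∈ u, x ∉ S2) ∨
         (∃ b : A, v = [b] ∧ b ∈ S2))) := by
  obtain ⟨c, t, rfl⟩ := List.exists_cons_of_ne_nil hw
  set p : A → Bool := fun x => decide (x ∉ S2) with hp
  set fac : List (List A) := (c :: t.takeWhile p) :: blocksAux S2 (t.dropWhile p) with hfac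
  have hgood : ∀ b, (t.dropWhile p).head? = some b → b ∈ S2 :=
    fun b hb => head?_dropWhile_mem S2 t b hb
  obtain ⟨hforms1, hforms2⟩ := blocksAux_forms S2 (t.dropWhile p) hgood
  refine ⟨fac, ⟨by simp [hfac], ?_, ?_, ?_, ?_⟩, ?_⟩
  · rw [hfac]
    simp only [List.flatten_cons]
    rw [blocksAux_flatten]
    simp [List.takeWhile_append_dropWhile]
  · intro v hv
    rw [hfac] at hv
    simp only [List.head?_cons, Option.some.injEq] at hv
    refine ⟨c, t.takeWhile p, hv.symm, fun x hx => ?_⟩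
    have := List.mem_takeWhile_imp hx
    simpa [hp] using this
  · intro v hv
    rw [hfac] at hv
    simp only [List.tail_cons] at hv
    exact hforms1 v hv
  · intro hne v hv
    rw [hfac] at hne hv
    simp only [List.tail_cons] at hne
    obtain ⟨d, ds, hds⟩ := List.exists_cons_of_ne_nil hne
    rw [hds, List.getLast?_cons_cons, ← hds] at hv
    exact hforms2 v hv
  · rintro vs ⟨hne, hflat, hhead, hmid, hlast⟩
    obtain ⟨v0, rest, rfl⟩ := List.exists_cons_of_ne_nil hne
    obtain ⟨a, u, hv0, hu⟩ := hhead v0 (by simp)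
    have hrest : rest = blocksAux S2 rest.flatten := by
      apply blocks_unique
      · intro x hx; exact hmid x (by simpa using hx)
      · intro x hx
        have hrne : rest ≠ [] := by rintro rfl; simp at hx
        obtain ⟨d, ds, hds⟩ := List.exists_cons_of_ne_nil hrne
        apply hlast (by simp [hrne])
        rw [hds, List.getLast?_cons_cons, ← hds]
        exact hx
    have hw' : c :: t = (a :: u) ++ rest.flatten := by
      rw [hflat, hv0]; simp
    simp only [List.cons_append] at hw'
    obtain ⟨rfl, ht⟩ : c = a ∧ t = u ++ rest.flatten := by
      constructor
      · exact (List.cons.injEq _ _ _ _ ▸ hw').1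
      · exact (List.cons.injEq _ _ _ _ ▸ hw').2
    have hu' : ∀ x ∈ u, p x = true := by intro x hx; simpa [hp] using hu x hx
    cases hrn : rest with
    | nil =>
      subst hrn
      simp only [List.flatten_nil, List.append_nil] at ht
      subst ht
      rw [hfac, hv0]
      rw [List.takeWhile_eq_self_iff.mpr hu', List.dropWhile_eq_nil_iff.mpr hu']
      simp [blocksAux]
    | cons v' rest' =>
      -- rest.flatten starts with b' ∈ S2
      have hv'form : TwoForm S2 v' ∨ SingleForm S2 v' := by
        cases hrn' : rest' with
        | nil =>
          refine hlast (by simp [hrn]) v' ?_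
          rw [hrn, hrn']; simp
        | cons w ws =>
          left
          apply hmid v'
          simp only [List.tail_cons, hrn, hrn']
          rw [List.dropLast_cons_of_ne_nil (by simp)]
          simp
      obtain ⟨b', u', hv'eq, hb'⟩ := exists_head_form S2 v' hv'form
      obtain ⟨m, hm⟩ : ∃ m, rest.flatten = b' :: m := by
        rw [hrn]
        exact flatten_head (v' :: rest') b' u' rest' (by rw [hv'eq])
      have hb'f : p b' = false := by simp [hp, hb']
      obtain ⟨htk, hdr⟩ := takeWhile_append_cons p u hu' b' hb'f m
      rw [hfac, hv0]
      rw [ht, hm, htk, hdr, ← hm, ← hrest, ← hrn]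

end
end
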